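/- arXiv:2011.09717 — 9 statements merged into one kernel-verified Lean document; each statement's English description precedes it below -/
import Mathlib

section
/- Let Γ be a symmetric clustering game on a finite simple graph G = (V,E) with c ≥ 2 colors and a positive distribution rule α with maximum disparity ᾱ. Then for every pure Nash equilibrium s of Γ and every strategy profile s*, we have u(s*) ≤ (1 + (1 + ᾱ)·ρ(G))·u(s); in particular, the Price of Anarchy of Γ is at most 1 + (1 + ᾱ)·ρ(G). -/
open Finset
open scoped Classical

variable {V : Type*}

noncomputable def edgesIn [Fintype V] (G : SimpleGraph V) (S : Finset V) : ℕ :=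
  (G.edgeFinset.filter fun e => ∀ v ∈ e, v ∈ S).card

noncomputable def maxDensity [Fintype V] (G : SimpleGraph V) : ℝ :=
  ⨆ S : {S : Finset V // S.Nonempty}, (edgesIn G S.1 : ℝ) / (S.1.card : ℝ)

noncomputable def maxDisparity (G : SimpleGraph V) (α : V → V → ℝ) : ℝ :=
  ⨆ p : {p : V × V // G.Adj p.1 p.2}, α p.1.1 p.1.2 / α p.1.2 p.1.1

noncomputable def util [Fintype V] (G : SimpleGraph V) (coord : V → V → Prop)
    (α w : V → V → ℝ) {c : ℕ} (q : V → Fin c → ℝ) (s : V → Fin c) (i : V) : ℝ :=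
  q i (s i) +
    ∑ j ∈ G.neighborFinset i,
      if (coord i j ∧ s i = s j) ∨ (¬ coord i j ∧ s i ≠ s j)
      then α i j / (α i j + α j i) * w i j else 0

noncomputable def welfare [Fintype V] (G : SimpleGraph V) (coord : V → V → Prop)
    (α w : V → V → ℝ) {c : ℕ} (q : V → Fin c → ℝ) (s : V → Fin c) : ℝ :=
  ∑ i, util G coord α w q s i

def IsNash [Fintype V] (G : SimpleGraph V) (coord : V → V → Prop)
    (α w : V → V → ℝ) {c : ℕ} (q : V → Fin c → ℝ) (s : V → Fin c) : Prop :=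
  ∀ (i : V) (k : Fin c),
    util G coord α w q (Function.update s i k) i ≤ util G coord α w q s i

noncomputable def utilA [Fintype V] (G : SimpleGraph V) (w : V → V → ℝ)
    {c : ℕ} (s : V → Fin c) (i : V) : ℝ :=
  ∑ j ∈ G.neighborFinset i, if s i = s j then w i j / 2 else 0

noncomputable def welfareA [Fintype V] (G : SimpleGraph V) (w : V → V → ℝ)
    {c : ℕ} (s : V → Fin c) : ℝ :=
  ∑ i, utilA G w s i

def IsNashA [Fintype V] (G : SimpleGraph V) (w : V → V → ℝ)
    {c : ℕ} (St : V → Finset (Fin c)) (s : V → Fin c) : Prop :=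
  ∀ i, ∀ k ∈ St i, utilA G w (Function.update s i k) i ≤ utilA G w s i

def IsEpsKEq [Fintype V] (G : SimpleGraph V) (w : V → V → ℝ)
    {c : ℕ} (St : V → Finset (Fin c)) (ε : ℝ) (k : ℕ) (s : V → Fin c) : Prop :=
  ∀ K : Finset V, K.Nonempty → K.card ≤ k →
    ∀ s' : V → Fin c, (∀ i ∈ K, s' i ∈ St i) → (∀ i ∉ K, s' i = s i) →
      ∃ j ∈ K, utilA G w s' j ≤ ε * utilA G w s j

def IsGWS (G : SimpleGraph V) (α : V → V → ℝ) : Prop :=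
  ∃ (σ : V → ℕ) (γ : V → ℝ), Function.Injective σ ∧ (∀ i, 0 ≤ γ i) ∧
    ∀ i j, G.Adj i j →
      (α i j = 0 → σ i < σ j) ∧
      (0 < α i j → α i j / (α i j + α j i) = γ i / (γ i + γ j))

def BRStep [Fintype V] (G : SimpleGraph V) (coord : V → V → Prop)
    (α w : V → V → ℝ) {c : ℕ} (q : V → Fin c → ℝ) (s s' : V → Fin c) : Prop :=
  ∃ i, (∀ j, j ≠ i → s' j = s j) ∧
    util G coord α w q s i < util G coord α w q s' i ∧
    ∀ k : Fin c, util G coord α w q (Function.update s i k) i ≤ util G coord α w q s' i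

/-! At a Nash equilibrium `s`, player `i` may recolour so as to satisfy any single incident edge
`{i, j}` (for an anti-coordination edge this needs a second colour); this deviation earns at least
`w i j / (1 + ᾱ)`, and also at least `q i k` for any colour `k`. Hence `w i j ≤ min (M i) (M j)`
with `M i = (1 + ᾱ) u_i(s)`, and `u(s*) ≤ u(s) + ∑_{ij ∈ E} min (M i) (M j)`, since the two shares of an
edge add up to its weight. The last sum is at most `ρ(G) ∑ M i`: removing the minimum `m` of `M` on
its support `T` costs `m |E[T]| ≤ m ρ(G) |T|` and leaves a function with smaller support. -/

namespace SimpleGraph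

variable [Fintype V] (G : SimpleGraph V)

theorem sum_darts_eq_sum_sum_neighborFinset {M : Type*} [AddCommMonoid M] (g : V → V → M) :
    ∑ d : G.Dart, g d.fst d.snd = ∑ i, ∑ j ∈ G.neighborFinset i, g i j := by
  rw [Finset.sum_sigma']
  exact Finset.sum_bij' (fun d _ => ⟨d.fst, d.snd⟩) (fun x hx => ⟨(x.1, x.2), by simpa using hx⟩)
    (by simp) (by simp) (by simp) (by simp) (by simp)

theorem sum_darts_edge_eq_two_nsmul {M : Type*} [AddCommMonoid M] (F : Sym2 V → M) :
    ∑ d : G.Dart, F d.edge = 2 • ∑ e ∈ G.edgeFinset, F e := by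
  rw [← Finset.sum_fiberwise_of_maps_to (g := Dart.edge) (t := G.edgeFinset)
    (fun d _ => mem_edgeFinset.2 d.edge_mem), Finset.smul_sum]
  refine Finset.sum_congr rfl fun e he => ?_
  rw [Finset.sum_congr rfl fun d hd => congrArg F (Finset.mem_filter.1 hd).2, Finset.sum_const,
    G.dart_edge_fiber_card e (mem_edgeFinset.1 he)]

theorem sum_sum_neighborFinset_le_sum_edgeFinset {F : V → V → ℝ} {H : Sym2 V → ℝ}
    (hFH : ∀ i j, G.Adj i j → F i j + F j i ≤ H s(i, j)) :
    ∑ i, ∑ j ∈ G.neighborFinset i, F i j ≤ ∑ e ∈ G.edgeFinset, H e := by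
  have hswap : ∑ d : G.Dart, F d.snd d.fst = ∑ d : G.Dart, F d.fst d.snd :=
    Fintype.sum_equiv (Function.Involutive.toPerm _ Dart.symm_involutive) _ _ fun _ => rfl
  have h2 : 2 * ∑ d : G.Dart, F d.fst d.snd ≤ 2 * ∑ e ∈ G.edgeFinset, H e := by
    calc 2 * ∑ d : G.Dart, F d.fst d.snd
        = ∑ d : G.Dart, (F d.fst d.snd + F d.snd d.fst) := by
          rw [Finset.sum_add_distrib, hswap, two_mul]
      _ ≤ ∑ d : G.Dart, H d.edge := Finset.sum_le_sum fun d _ => hFH _ _ d.adj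
      _ = 2 * ∑ e ∈ G.edgeFinset, H e := by
          rw [sum_darts_edge_eq_two_nsmul, nsmul_eq_mul, Nat.cast_ofNat]
  rw [← sum_darts_eq_sum_sum_neighborFinset]
  linarith

theorem edgesIn_le_maxDensity_mul_card {T : Finset V} (hT : T.Nonempty) :
    (edgesIn G T : ℝ) ≤ maxDensity G * T.card := by
  have hcard : (0 : ℝ) < T.card := by exact_mod_cast hT.card_pos
  rw [← div_le_iff₀ hcard]
  exact le_ciSup (f := fun S : {S : Finset V // S.Nonempty} => (edgesIn G S.1 : ℝ) / S.1.card)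
    (Set.finite_range _).bddAbove ⟨T, hT⟩

theorem sum_edgeFinset_inf_le_of_support_subset (T : Finset V) :
    ∀ f : V → ℝ, (∀ i, 0 ≤ f i) → (∀ i ∉ T, f i = 0) →
      ∑ e ∈ G.edgeFinset, (e.map f).inf ≤ maxDensity G * ∑ i, f i := by
  induction T using Finset.strongInduction with
  | H T ih =>
  intro f hf hfT
  rcases T.eq_empty_or_nonempty with rfl | hne
  · obtain rfl : f = 0 := funext fun i => hfT i (Finset.notMem_empty i)
    refine (Finset.sum_eq_zero fun e _ => ?_).le.trans (by simp)
    induction e using Sym2.ind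
    simp
  obtain ⟨i₀, hi₀, hmin⟩ := T.exists_min_image f hne
  set m := f i₀
  set g : V → ℝ := fun i => f i - if i ∈ T then m else 0
  have hg : ∀ i, 0 ≤ g i := fun i => by
    by_cases hi : i ∈ T <;> simp [g, hi, hmin, hfT]
  have hgT : ∀ i ∉ T.erase i₀, g i = 0 := fun i hi => by
    by_cases hi' : i ∈ T
    · obtain rfl : i = i₀ := by simpa [hi'] using hi
      simp [g, hi', m]
    · simp [g, hi', hfT]
  have hedge : ∀ e : Sym2 V,
      (e.map f).inf = (if ∀ v ∈ e, v ∈ T then m else 0) + (e.map g).inf := by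
    intro e
    induction e using Sym2.ind with
    | h i j =>
    by_cases hi : i ∈ T <;> by_cases hj : j ∈ T
    · simp [g, hi, hj, min_sub_sub_right]
    · simp [g, hi, hj, hfT, hf, hmin]
    · simp [g, hi, hj, hfT, hf, hmin]
    · simp [g, hi, hj, hfT]
  have hsum : ∑ i, f i = m * T.card + ∑ i, g i := by
    simp [g, Finset.sum_ite_mem, mul_comm]
  calc ∑ e ∈ G.edgeFinset, (e.map f).inf
      = m * edgesIn G T + ∑ e ∈ G.edgeFinset, (e.map g).inf := by
        rw [Finset.sum_congr rfl fun e _ => hedge e, Finset.sum_add_distrib, Finset.sum_ite,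
          Finset.sum_const, Finset.sum_const_zero, add_zero, nsmul_eq_mul, mul_comm, edgesIn]
    _ ≤ m * (maxDensity G * T.card) + maxDensity G * ∑ i, g i :=
        add_le_add (mul_le_mul_of_nonneg_left (G.edgesIn_le_maxDensity_mul_card hne) (hf i₀))
          (ih _ (Finset.erase_ssubset hi₀) g hg hgT)
    _ = maxDensity G * ∑ i, f i := by rw [hsum]; ring

theorem sum_edgeFinset_inf_le_maxDensity_mul_sum {f : V → ℝ} (hf : ∀ i, 0 ≤ f i) :
    ∑ e ∈ G.edgeFinset, (e.map f).inf ≤ maxDensity G * ∑ i, f i :=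
  G.sum_edgeFinset_inf_le_of_support_subset univ f hf fun i hi => absurd (mem_univ i) hi

end SimpleGraph

section ClusteringGame

variable {c : ℕ}

-- Reducible, so that `if IsSatisfied ..` uses the same `Decidable` instance as the `if` in `util`.
abbrev IsSatisfied (coord : V → V → Prop) (s : V → Fin c) (i j : V) : Prop :=
  (coord i j ∧ s i = s j) ∨ (¬ coord i j ∧ s i ≠ s j)

noncomputable def edgeShare (α w : V → V → ℝ) (i j : V) : ℝ :=
  α i j / (α i j + α j i) * w i j

noncomputable def edgeUtil [Fintype V] (G : SimpleGraph V) (coord : V → V → Prop)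
    (α w : V → V → ℝ) (s : V → Fin c) (i : V) : ℝ :=
  ∑ j ∈ G.neighborFinset i, if IsSatisfied coord s i j then edgeShare α w i j else 0

theorem util_eq_add_edgeUtil [Fintype V] (G : SimpleGraph V) (coord : V → V → Prop)
    (α w : V → V → ℝ) (q : V → Fin c → ℝ) (s : V → Fin c) (i : V) :
    util G coord α w q s i = q i (s i) + edgeUtil G coord α w s i :=
  rfl

theorem welfare_eq_add_sum_edgeUtil [Fintype V] (G : SimpleGraph V) (coord : V → V → Prop)
    (α w : V → V → ℝ) (q : V → Fin c → ℝ) (s : V → Fin c) :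
    welfare G coord α w q s = ∑ i, q i (s i) + ∑ i, edgeUtil G coord α w s i :=
  Finset.sum_add_distrib

theorem edgeShare_nonneg {α w : V → V → ℝ} {i j : V} (hij : 0 ≤ α i j) (hji : 0 ≤ α j i)
    (hw : 0 ≤ w i j) : 0 ≤ edgeShare α w i j :=
  mul_nonneg (div_nonneg hij (add_nonneg hij hji)) hw

theorem edgeShare_add_edgeShare {α w : V → V → ℝ} {i j : V} (hα : α i j + α j i ≠ 0)
    (hw : w j i = w i j) : edgeShare α w i j + edgeShare α w j i = w i j := by
  rw [edgeShare, edgeShare, hw, add_comm (α j i), ← add_mul, ← add_div, div_self hα, one_mul]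

theorem le_one_add_mul_edgeShare {α w : V → V → ℝ} {i j : V} {D : ℝ} (hij : 0 < α i j)
    (hji : 0 ≤ α j i) (hD : α j i ≤ D * α i j) (hw : 0 ≤ w i j) :
    w i j ≤ (1 + D) * edgeShare α w i j := by
  rw [edgeShare, ← mul_assoc, mul_div_assoc']
  refine le_mul_of_one_le_left hw ?_
  rw [one_le_div (by positivity)]
  linarith

theorem div_le_maxDisparity [Finite V] (G : SimpleGraph V) (α : V → V → ℝ) {i j : V}
    (h : G.Adj i j) : α i j / α j i ≤ maxDisparity G α :=
  le_ciSup (f := fun p : {p : V × V // G.Adj p.1 p.2} => α p.1.1 p.1.2 / α p.1.2 p.1.1)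
    (Set.finite_range _).bddAbove ⟨(i, j), h⟩

theorem maxDisparity_nonneg (G : SimpleGraph V) {α : V → V → ℝ}
    (hα : ∀ i j, G.Adj i j → 0 ≤ α i j) : 0 ≤ maxDisparity G α :=
  Real.iSup_nonneg fun p => div_nonneg (hα _ _ p.2) (hα _ _ p.2.symm)

theorem exists_isSatisfied_update (coord : V → V → Prop) (hc : 2 ≤ c) (s : V → Fin c)
    {i j : V} (hij : i ≠ j) : ∃ k, IsSatisfied coord (Function.update s i k) i j := by
  simp only [IsSatisfied, Function.update_self, Function.update_of_ne hij.symm]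
  by_cases hco : coord i j
  · exact ⟨s j, Or.inl ⟨hco, rfl⟩⟩
  · obtain ⟨k, hk⟩ := Fintype.exists_ne_of_one_lt_card (by rw [Fintype.card_fin]; exact hc) (s j)
    exact ⟨k, Or.inr ⟨hco, hk⟩⟩

theorem ite_isSatisfied_edgeShare_nonneg {G : SimpleGraph V} {coord : V → V → Prop}
    {α w : V → V → ℝ} (hα : ∀ i j, G.Adj i j → 0 ≤ α i j)
    (hw : ∀ i j, 0 ≤ w i j) (s : V → Fin c) {i j : V} (hadj : G.Adj i j) :
    0 ≤ if IsSatisfied coord s i j then edgeShare α w i j else 0 :=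
  ite_nonneg (edgeShare_nonneg (hα i j hadj) (hα j i hadj.symm) (hw i j)) le_rfl

variable [Fintype V] {G : SimpleGraph V} {coord : V → V → Prop} {α w : V → V → ℝ}
  {q : V → Fin c → ℝ}

theorem edgeUtil_nonneg (hα : ∀ i j, G.Adj i j → 0 ≤ α i j) (hw : ∀ i j, 0 ≤ w i j)
    (s : V → Fin c) (i : V) : 0 ≤ edgeUtil G coord α w s i :=
  Finset.sum_nonneg fun _ hj =>
    ite_isSatisfied_edgeShare_nonneg hα hw s ((G.mem_neighborFinset _ _).1 hj)

theorem edgeShare_le_edgeUtil (hα : ∀ i j, G.Adj i j → 0 ≤ α i j) (hw : ∀ i j, 0 ≤ w i j)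
    {s : V → Fin c} {i j : V} (hadj : G.Adj i j) (hsat : IsSatisfied coord s i j) :
    edgeShare α w i j ≤ edgeUtil G coord α w s i := by
  have hterm := Finset.single_le_sum (f := fun j =>
      if IsSatisfied coord s i j then edgeShare α w i j else 0)
    (fun _ hj => ite_isSatisfied_edgeShare_nonneg hα hw s ((G.mem_neighborFinset _ _).1 hj))
    ((G.mem_neighborFinset i j).2 hadj)
  rwa [if_pos hsat] at hterm

theorem edgeUtil_le_sum_edgeShare (hα : ∀ i j, G.Adj i j → 0 ≤ α i j) (hw : ∀ i j, 0 ≤ w i j)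
    (s : V → Fin c) (i : V) :
    edgeUtil G coord α w s i ≤ ∑ j ∈ G.neighborFinset i, edgeShare α w i j :=
  Finset.sum_le_sum fun j hj => by
    have hadj := (G.mem_neighborFinset i j).1 hj
    split_ifs
    exacts [le_rfl, edgeShare_nonneg (hα i j hadj) (hα j i hadj.symm) (hw i j)]

namespace IsNash

variable {s : V → Fin c}

theorem apply_le_util (hs : IsNash G coord α w q s) (hα : ∀ i j, G.Adj i j → 0 ≤ α i j)
    (hw : ∀ i j, 0 ≤ w i j) (i : V) (k : Fin c) : q i k ≤ util G coord α w q s i := by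
  have hdev := hs i k
  rw [util_eq_add_edgeUtil, Function.update_self] at hdev
  linarith [edgeUtil_nonneg (coord := coord) hα hw (Function.update s i k) i]

theorem edgeShare_le_util (hs : IsNash G coord α w q s) (hc : 2 ≤ c)
    (hα : ∀ i j, G.Adj i j → 0 ≤ α i j) (hw : ∀ i j, 0 ≤ w i j)
    (hq : ∀ i k, 0 ≤ q i k) {i j : V} (hadj : G.Adj i j) :
    edgeShare α w i j ≤ util G coord α w q s i := by
  obtain ⟨k, hk⟩ := exists_isSatisfied_update coord hc s hadj.ne
  have hdev := hs i k
  rw [util_eq_add_edgeUtil] at hdev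
  linarith [edgeShare_le_edgeUtil hα hw hadj hk, hq i (Function.update s i k i)]

theorem le_one_add_maxDisparity_mul_util (hs : IsNash G coord α w q s) (hc : 2 ≤ c)
    (hα : ∀ i j, G.Adj i j → 0 < α i j) (hw : ∀ i j, 0 ≤ w i j)
    (hq : ∀ i k, 0 ≤ q i k) {i j : V} (hadj : G.Adj i j) :
    w i j ≤ (1 + maxDisparity G α) * util G coord α w q s i := by
  have hα' : ∀ i j, G.Adj i j → 0 ≤ α i j := fun i j h => (hα i j h).le
  have hD : α j i ≤ maxDisparity G α * α i j :=
    (div_le_iff₀ (hα i j hadj)).1 (div_le_maxDisparity G α hadj.symm)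
  calc w i j ≤ (1 + maxDisparity G α) * edgeShare α w i j :=
        le_one_add_mul_edgeShare (hα i j hadj) (hα' j i hadj.symm) hD (hw i j)
    _ ≤ (1 + maxDisparity G α) * util G coord α w q s i := by
        have := maxDisparity_nonneg G hα'
        gcongr
        exact hs.edgeShare_le_util hc hα' hw hq hadj

end IsNash

end ClusteringGame

theorem stmt0_general [Fintype V] (G : SimpleGraph V) (coord : V → V → Prop)
    (c : ℕ) (hc : 2 ≤ c)
    (α w : V → V → ℝ) (q : V → Fin c → ℝ)
    (hα : ∀ i j, G.Adj i j → 0 < α i j)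
    (hw : ∀ i j, 0 ≤ w i j) (hwsymm : ∀ i j, w i j = w j i)
    (hq : ∀ i k, 0 ≤ q i k)
    (s sstar : V → Fin c) (hs : IsNash G coord α w q s) :
    welfare G coord α w q sstar ≤
      (1 + (1 + maxDisparity G α) * maxDensity G) * welfare G coord α w q s := by
  have hα' : ∀ i j, G.Adj i j → 0 ≤ α i j := fun i j h => (hα i j h).le
  set M : V → ℝ := fun i => (1 + maxDisparity G α) * util G coord α w q s i
  have hM : ∀ i, 0 ≤ M i := fun i =>
    mul_nonneg (by linarith [maxDisparity_nonneg G hα'])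
      ((hq i (s i)).trans (hs.apply_le_util hα' hw i (s i)))
  have hshare : ∀ i j, G.Adj i j →
      edgeShare α w i j + edgeShare α w j i ≤ (s(i, j).map M).inf := fun i j h => by
    rw [edgeShare_add_edgeShare (add_pos (hα i j h) (hα j i h.symm)).ne' (hwsymm j i), Sym2.map_mk,
      Sym2.inf_mk]
    exact le_inf (hs.le_one_add_maxDisparity_mul_util hc hα hw hq h)
      (hwsymm i j ▸ hs.le_one_add_maxDisparity_mul_util hc hα hw hq h.symm)
  calc welfare G coord α w q sstar
      = ∑ i, q i (sstar i) + ∑ i, edgeUtil G coord α w sstar i :=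
        welfare_eq_add_sum_edgeUtil G coord α w q sstar
    _ ≤ welfare G coord α w q s + ∑ e ∈ G.edgeFinset, (e.map M).inf :=
        add_le_add (Finset.sum_le_sum fun i _ => hs.apply_le_util hα' hw i (sstar i))
          ((Finset.sum_le_sum fun i _ => edgeUtil_le_sum_edgeShare hα' hw sstar i).trans
            (G.sum_sum_neighborFinset_le_sum_edgeFinset hshare))
    _ ≤ welfare G coord α w q s + maxDensity G * ∑ i, M i := by
        gcongr
        exact G.sum_edgeFinset_inf_le_maxDensity_mul_sum hM
    _ = (1 + (1 + maxDisparity G α) * maxDensity G) * welfare G coord α w q s := by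
        rw [← Finset.mul_sum, welfare]
        ring

theorem stmt0 [Fintype V] (G : SimpleGraph V) (coord : V → V → Prop)
    (hcoord : ∀ i j, coord i j ↔ coord j i)
    (c : ℕ) (hc : 2 ≤ c)
    (α w : V → V → ℝ) (q : V → Fin c → ℝ)
    (hα : ∀ i j, G.Adj i j → 0 < α i j)
    (hw : ∀ i j, 0 ≤ w i j) (hwsymm : ∀ i j, w i j = w j i)
    (hq : ∀ i k, 0 ≤ q i k)
    (s sstar : V → Fin c) (hs : IsNash G coord α w q s) :
    welfare G coord α w q sstar ≤
      (1 + (1 + maxDisparity G α) * maxDensity G) * welfare G coord α w q s :=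
  stmt0_general G coord c hc α w q hα hw hwsymm hq s sstar hs
end

section
/- For all integers l, r ≥ 1 and all reals γ_L, γ_R > 0, there exists a symmetric coordination game on the complete bipartite graph K_{l,r} (with left part L of size l and right part R of size r), with c = l + r + 1 colors, unit edge weights, suitable individual preferences, and a distribution rule α satisfying α_{ij}/(α_{ij}+α_{ji}) = γ_i/(γ_i+γ_j) for every edge {i,j} (where γ_i = γ_L for i ∈ L and γ_i = γ_R for i ∈ R), such that the game has a pure Nash equilibrium s with u(s) = (l·γ_L + r·γ_R)/(γ_L+γ_R) > 0 and a strategy profile s* with u(s*) = u(s) + l·r; hence u(s*)/u(s) = 1 + l·r·(γ_L+γ_R)/(l·γ_L + r·γ_R). -/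
open Finset
open scoped Classical

variable {V : Type*}

/-!
Give each player `i` a private colour `σ i` and let all players share a further colour `⋆`,
with preference `p i = γ_i / (γ_L + γ_R)` for both. In the profile `σ` no edge is satisfied; a
deviation either keeps the bonus `p i` and meets no neighbour, or loses it and meets at most
one neighbour, whose edge share `γ_i / (γ_i + γ_j)` is again `p i`. So `σ` is an equilibrium of
welfare `∑ p i`. Moving everyone to `⋆` keeps every bonus and satisfies every edge, and since the
two shares of an edge add up to its weight, this adds `|E(K_{l,r})| = l r` to the welfare.
-/

open SimpleGraph Function

lemma sum_ite_eq_comp_le {ι β : Type*} [DecidableEq β] (s : Finset ι) {σ : ι → β}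
    (hσ : Injective σ) (k : β) {f : ι → ℝ} {b : ℝ} (hb : 0 ≤ b) (hf : ∀ j ∈ s, f j ≤ b) :
    ∑ j ∈ s, (if k = σ j then f j else 0) ≤ b := by
  by_cases hk : ∃ j₀, σ j₀ = k
  · obtain ⟨j₀, rfl⟩ := hk
    simp only [hσ.eq_iff, sum_ite_eq]
    split_ifs with h
    exacts [hf j₀ h, hb]
  · push Not at hk
    rw [sum_eq_zero fun j _ => if_neg (hk j).symm]
    exact hb

section CoordinationGame

variable [Fintype V] (G : SimpleGraph V) (α w : V → V → ℝ) {c : ℕ}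
  (q : V → Fin c → ℝ)

lemma util_coordination (s : V → Fin c) (i : V) :
    util G (fun _ _ => True) α w q s i =
      q i (s i) + ∑ j ∈ G.neighborFinset i,
        if s i = s j then α i j / (α i j + α j i) * w i j else 0 := by
  simp only [util, true_and, not_true_eq_false, false_and, or_false]

lemma util_of_injective {σ : V → Fin c} (hσ : Injective σ) (i : V) :
    util G (fun _ _ => True) α w q σ i = q i (σ i) := by
  rw [util_coordination, add_eq_left]
  refine sum_eq_zero fun j hj => if_neg fun h => ?_
  exact G.ne_of_adj ((G.mem_neighborFinset i j).mp hj) (hσ h)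

lemma welfare_of_injective {σ : V → Fin c} (hσ : Injective σ) :
    welfare G (fun _ _ => True) α w q σ = ∑ i, q i (σ i) :=
  sum_congr rfl fun i _ => util_of_injective G α w q hσ i

lemma sum_sum_neighborFinset_share_eq_card_edgeFinset
    (hα : ∀ i j, G.Adj i j → α i j + α j i ≠ 0) (hw : ∀ i j, G.Adj i j → w i j = 1) :
    ∑ i, ∑ j ∈ G.neighborFinset i, α i j / (α i j + α j i) * w i j = #G.edgeFinset := by
  set f : V → V → ℝ := fun i j => α i j / (α i j + α j i) * w i j
  have hswap :
      ∑ i, ∑ j ∈ G.neighborFinset i, f i j = ∑ i, ∑ j ∈ G.neighborFinset i, f j i := by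
    simp only [neighborFinset_eq_filter, sum_filter]
    rw [sum_comm]
    simp only [G.adj_comm]
  have hpair : ∀ i, ∀ j ∈ G.neighborFinset i, f i j + f j i = 1 := by
    intro i j hj
    have hij := (G.mem_neighborFinset i j).mp hj
    simp only [f, hw i j hij, hw j i hij.symm, mul_one, add_comm (α j i), ← add_div]
    exact div_self (hα i j hij)
  have htwice : 2 * ∑ i, ∑ j ∈ G.neighborFinset i, f i j = 2 * #G.edgeFinset :=
    calc 2 * ∑ i, ∑ j ∈ G.neighborFinset i, f i j
        = ∑ i, ∑ j ∈ G.neighborFinset i, (f i j + f j i) := by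
          rw [two_mul]
          nth_rewrite 2 [hswap]
          simp only [← sum_add_distrib]
      _ = ∑ i, (G.degree i : ℝ) := by
          refine sum_congr rfl fun i _ => ?_
          rw [sum_congr rfl (hpair i), sum_const, card_neighborFinset_eq_degree, nsmul_one]
      _ = 2 * #G.edgeFinset := by exact_mod_cast G.sum_degrees_eq_twice_card_edges
  linarith

lemma util_const (k : Fin c) (i : V) :
    util G (fun _ _ => True) α w q (fun _ => k) i =
      q i k + ∑ j ∈ G.neighborFinset i, α i j / (α i j + α j i) * w i j := by
  simp only [util_coordination, if_true]

lemma welfare_const_of_unit_weights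
    (hα : ∀ i j, G.Adj i j → α i j + α j i ≠ 0) (hw : ∀ i j, G.Adj i j → w i j = 1)
    (k : Fin c) :
    welfare G (fun _ _ => True) α w q (fun _ => k) = ∑ i, q i k + #G.edgeFinset := by
  simp only [welfare, util_const, sum_add_distrib,
    sum_sum_neighborFinset_share_eq_card_edgeFinset G α w hα hw]

def starPref (p : V → ℝ) (σ : V → Fin c) (star : Fin c) : V → Fin c → ℝ :=
  fun i k => if k = σ i ∨ k = star then p i else 0

omit [Fintype V] in
@[simp]
lemma starPref_self (p : V → ℝ) (σ : V → Fin c) (star : Fin c) (i : V) :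
    starPref p σ star i (σ i) = p i :=
  if_pos (Or.inl rfl)

omit [Fintype V] in
@[simp]
lemma starPref_star (p : V → ℝ) (σ : V → Fin c) (star : Fin c) (i : V) :
    starPref p σ star i star = p i :=
  if_pos (Or.inr rfl)

lemma isNash_starPref {σ : V → Fin c} (hσ : Injective σ) {star : Fin c}
    (hstar : ∀ i, σ i ≠ star) {p : V → ℝ} (hp : ∀ i, 0 ≤ p i)
    (hshare : ∀ i j, G.Adj i j → α i j / (α i j + α j i) * w i j ≤ p i) :
    IsNash G (fun _ _ => True) α w (starPref p σ star) σ := by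
  intro i k
  have hnbr : ∀ j ∈ G.neighborFinset i, update σ i k j = σ j := fun j hj =>
    update_of_ne (G.ne_of_adj ((G.mem_neighborFinset i j).mp hj)).symm k σ
  rw [util_coordination, util_of_injective G α w _ hσ, update_self, starPref_self,
    sum_congr rfl fun j hj => by rw [hnbr j hj]]
  by_cases hk : k = σ i ∨ k = star
  · rw [starPref, if_pos hk, add_le_iff_nonpos_right]
    refine (sum_eq_zero fun j hj => if_neg ?_).le
    rintro rfl
    rcases hk with h | h
    · exact G.ne_of_adj ((G.mem_neighborFinset i j).mp hj) (hσ h).symm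
    · exact hstar j h
  · rw [starPref, if_neg hk, zero_add]
    exact sum_ite_eq_comp_le _ hσ k (hp i) fun j hj =>
      hshare i j ((G.mem_neighborFinset i j).mp hj)

end CoordinationGame

lemma card_edgeFinset_completeBipartiteGraph (W₁ W₂ : Type*) [Fintype W₁] [Fintype W₂] :
    #(completeBipartiteGraph W₁ W₂).edgeFinset = Fintype.card W₁ * Fintype.card W₂ := by
  have h := encard_edgeSet_completeBipartiteGraph (W₁ := W₁) (W₂ := W₂)
  rw [← coe_edgeFinset, Set.encard_coe_eq_coe_finsetCard] at h
  simp only [ENat.card_eq_coe_fintype_card] at h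
  exact_mod_cast h

lemma completeBipartiteGraph_adj_sum_elim_add {W₁ W₂ : Type*} (a b : ℝ) {i j : W₁ ⊕ W₂}
    (h : (completeBipartiteGraph W₁ W₂).Adj i j) :
    Sum.elim (fun _ => a) (fun _ => b) i + Sum.elim (fun _ => a) (fun _ => b) j = a + b := by
  rcases i with _ | _ <;> rcases j with _ | _ <;> simp_all [add_comm]

theorem stmt1 (l r : ℕ) (hl : 1 ≤ l) (hr : 1 ≤ r)
    (γL γR : ℝ) (hγL : 0 < γL) (hγR : 0 < γR) :
    ∃ (α w : (Fin l ⊕ Fin r) → (Fin l ⊕ Fin r) → ℝ)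
      (q : (Fin l ⊕ Fin r) → Fin (l + r + 1) → ℝ),
      (∀ i j, 0 ≤ α i j) ∧
      (∀ i j, (completeBipartiteGraph (Fin l) (Fin r)).Adj i j → 0 < α i j + α j i) ∧
      (∀ i j, (completeBipartiteGraph (Fin l) (Fin r)).Adj i j →
        α i j / (α i j + α j i) =
          Sum.elim (fun _ => γL) (fun _ => γR) i /
            (Sum.elim (fun _ => γL) (fun _ => γR) i +
              Sum.elim (fun _ => γL) (fun _ => γR) j)) ∧
      (∀ i j, (completeBipartiteGraph (Fin l) (Fin r)).Adj i j → w i j = 1) ∧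
      (∀ i k, 0 ≤ q i k) ∧
      ∃ s : (Fin l ⊕ Fin r) → Fin (l + r + 1),
        IsNash (completeBipartiteGraph (Fin l) (Fin r)) (fun _ _ => True) α w q s ∧
        welfare (completeBipartiteGraph (Fin l) (Fin r)) (fun _ _ => True) α w q s =
          (l * γL + r * γR) / (γL + γR) ∧
        0 < welfare (completeBipartiteGraph (Fin l) (Fin r)) (fun _ _ => True) α w q s ∧
        ∃ sstar : (Fin l ⊕ Fin r) → Fin (l + r + 1),
          welfare (completeBipartiteGraph (Fin l) (Fin r)) (fun _ _ => True) α w q sstar =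
            welfare (completeBipartiteGraph (Fin l) (Fin r)) (fun _ _ => True) α w q s
              + l * r := by
  set G := completeBipartiteGraph (Fin l) (Fin r)
  set γ : Fin l ⊕ Fin r → ℝ := Sum.elim (fun _ => γL) (fun _ => γR)
  have hγ : ∀ i, 0 < γ i := by rintro (_ | _) <;> assumption
  have hΓ : 0 < γL + γR := add_pos hγL hγR
  set p : Fin l ⊕ Fin r → ℝ := fun i => γ i / (γL + γR)
  have hp : ∀ i, 0 ≤ p i := fun i => div_nonneg (hγ i).le hΓ.le
  have hshare : ∀ i j, G.Adj i j → γ i / (γ i + γ j) * 1 ≤ p i := fun i j hij => by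
    rw [mul_one, completeBipartiteGraph_adj_sum_elim_add γL γR hij]
  have hsum_p : ∑ i, p i = (l * γL + r * γR) / (γL + γR) := by
    simp only [p, ← sum_div, Fintype.sum_sum_type, γ, Sum.elim_inl, Sum.elim_inr, sum_const,
      card_univ, Fintype.card_fin, nsmul_eq_mul]
  have hsum_p_pos : 0 < (l * γL + r * γR) / (γL + γR) := by
    have hl' : (0 : ℝ) < l := Nat.cast_pos.mpr hl
    have hr' : (0 : ℝ) < r := Nat.cast_pos.mpr hr
    positivity
  let σ : Fin l ⊕ Fin r → Fin (l + r + 1) := Fin.castSucc ∘ finSumFinEquiv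
  have hσ : Injective σ := (Fin.castSucc_injective _).comp finSumFinEquiv.injective
  have hσ_last : ∀ i, σ i ≠ Fin.last (l + r) := fun i => Fin.castSucc_ne_last _
  refine ⟨fun i _ => γ i, fun _ _ => 1, starPref p σ (Fin.last (l + r)),
    fun i _ => (hγ i).le, fun i j _ => add_pos (hγ i) (hγ j), fun _ _ _ => rfl,
    fun _ _ _ => rfl, fun i _ => ite_nonneg (hp i) le_rfl, σ,
    isNash_starPref G _ _ hσ hσ_last hp hshare, ?_, ?_, fun _ => Fin.last (l + r), ?_⟩
  · simp only [welfare_of_injective G _ _ _ hσ, starPref_self, hsum_p]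
  · simpa only [welfare_of_injective G _ _ _ hσ, starPref_self, hsum_p] using hsum_p_pos
  · rw [welfare_const_of_unit_weights G _ _ _ (fun i j _ => (add_pos (hγ i) (hγ j)).ne')
      (fun _ _ _ => rfl), welfare_of_injective G _ _ _ hσ,
      card_edgeFinset_completeBipartiteGraph]
    simp only [starPref_self, starPref_star, Fintype.card_fin, Nat.cast_mul]
end

section
/- Let G = (V,E) be a finite simple graph and let u : V → ℝ≥0 be any assignment of nonnegative reals to the vertices. Then Σ_{{i,j}∈E} min{u_i, u_j} ≤ ρ(G) · Σ_{i∈V} u_i. -/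
/-!
A layer-cake argument. Let `S` be the support of `u` and `m` the least value of `u` on `S`.
Splitting every value `x` as `(x - m)⁺ + min x m` splits each edge term `min (u i) (u j)`
the same way, because both parts are monotone in `x`. The second part is `m • 1_S`, which
contributes `m · |E[S]| ≤ m · ρ(G) · |S|`, while the first part has a strictly smaller
support, so induction on the size of the support finishes the proof.
-/

open Finset
open scoped Classical

variable {V : Type*}

lemma min_add_min_of_add_eq_self {α : Type*} [LinearOrder α] [Add α] {f g : α → α}
    (hf : Monotone f) (hg : Monotone g) (hfg : ∀ x, f x + g x = x) (a b : α) :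
    min (f a) (f b) + min (g a) (g b) = min a b := by
  rw [← hf.map_min, ← hg.map_min, hfg]

lemma posPart_sub_add_min (x m : ℝ) : max (x - m) 0 + min x m = x := by
  rcases le_total x m with h | h
  · rw [max_eq_right (by linarith), min_eq_left h, zero_add]
  · rw [max_eq_left (by linarith), min_eq_right h, sub_add_cancel]

lemma maxDensity_bddAbove [Fintype V] (G : SimpleGraph V) :
    BddAbove (Set.range fun S : {S : Finset V // S.Nonempty} =>
      (edgesIn G S.1 : ℝ) / (S.1.card : ℝ)) := by
  refine ⟨G.edgeFinset.card, ?_⟩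
  rintro x ⟨S, rfl⟩
  calc (edgesIn G S.1 : ℝ) / S.1.card ≤ edgesIn G S.1 :=
        div_le_self (by positivity) (by exact_mod_cast S.2.card_pos)
    _ ≤ G.edgeFinset.card := by exact_mod_cast card_filter_le _ _

lemma edgesIn_le_maxDensity_mul_card [Fintype V] (G : SimpleGraph V) {S : Finset V}
    (hS : S.Nonempty) : (edgesIn G S : ℝ) ≤ maxDensity G * S.card := by
  have hcard : (0 : ℝ) < S.card := by exact_mod_cast hS.card_pos
  rw [← div_le_iff₀ hcard]
  exact le_ciSup (maxDensity_bddAbove G) ⟨S, hS⟩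

noncomputable def edgeMinSum [Fintype V] (G : SimpleGraph V) (u : V → ℝ) : ℝ :=
  ∑ e ∈ G.edgeFinset,
    Sym2.lift ⟨fun i j => min (u i) (u j), fun i j => min_comm (u i) (u j)⟩ e

lemma edgeMinSum_zero [Fintype V] (G : SimpleGraph V) : edgeMinSum G 0 = 0 :=
  sum_eq_zero fun e _ => by induction e using Sym2.ind; simp

lemma edgeMinSum_eq_posPart_sub_add_min [Fintype V] (G : SimpleGraph V) (u : V → ℝ) (m : ℝ) :
    edgeMinSum G u =
      edgeMinSum G (fun i => max (u i - m) 0) + edgeMinSum G (fun i => min (u i) m) := by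
  have hsplit := min_add_min_of_add_eq_self (f := fun x => max (x - m) 0) (g := fun x => min x m)
    (fun x y h => max_le_max (by linarith) le_rfl) (fun x y h => min_le_min h le_rfl)
    (posPart_sub_add_min · m)
  unfold edgeMinSum
  rw [← sum_add_distrib]
  refine sum_congr rfl fun e _ => ?_
  induction e using Sym2.ind with
  | _ i j => simp [hsplit]

lemma edgeMinSum_ite_mem [Fintype V] (G : SimpleGraph V) (S : Finset V) {m : ℝ} (hm : 0 ≤ m) :
    edgeMinSum G (fun i => if i ∈ S then m else 0) = m * edgesIn G S := by
  have hedge : ∀ e : Sym2 V,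
      Sym2.lift ⟨fun i j => min (if i ∈ S then m else 0) (if j ∈ S then m else 0),
        fun i j => min_comm _ _⟩ e = if ∀ v ∈ e, v ∈ S then m else 0 := by
    intro e
    induction e using Sym2.ind with
    | _ i j => by_cases hi : i ∈ S <;> by_cases hj : j ∈ S <;> simp [hi, hj, hm]
  simp only [edgeMinSum, hedge, ← sum_filter, sum_const, nsmul_eq_mul, edgesIn, mul_comm]

noncomputable def posSupport [Fintype V] (u : V → ℝ) : Finset V :=
  univ.filter fun i => 0 < u i

section posSupport

variable [Fintype V] {u : V → ℝ}

@[simp]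
lemma mem_posSupport {i : V} : i ∈ posSupport u ↔ 0 < u i := by
  simp [posSupport]

lemma posSupport_eq_empty (hu : ∀ i, 0 ≤ u i) (h : posSupport u = ∅) : u = 0 :=
  funext fun i => le_antisymm (not_lt.1 fun hi => by simpa [h] using mem_posSupport.2 hi) (hu i)

lemma min_inf'_posSupport (hu : ∀ i, 0 ≤ u i) (hne : (posSupport u).Nonempty) (i : V) :
    min (u i) ((posSupport u).inf' hne u) =
      if i ∈ posSupport u then (posSupport u).inf' hne u else 0 := by
  split_ifs with hi
  · exact min_eq_right (inf'_le u hi)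
  · rw [le_antisymm (not_lt.1 (mem_posSupport.not.1 hi)) (hu i)]
    exact min_eq_left ((lt_inf'_iff hne).2 fun _ => mem_posSupport.1).le

lemma card_posSupport_posPart_sub_inf'_lt (hne : (posSupport u).Nonempty) :
    (posSupport fun i => max (u i - (posSupport u).inf' hne u) 0).card < (posSupport u).card := by
  obtain ⟨i₀, hi₀, hmin⟩ := (posSupport u).exists_mem_eq_inf' hne u
  have hsub : (posSupport fun i => max (u i - (posSupport u).inf' hne u) 0) ⊆
      (posSupport u).erase i₀ := by
    intro i hi
    have hlt : (posSupport u).inf' hne u < u i := by simpa using hi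
    refine mem_erase.2 ⟨fun h => by rw [h, ← hmin] at hlt; exact lt_irrefl _ hlt, ?_⟩
    exact mem_posSupport.2 (((lt_inf'_iff hne).2 fun _ => mem_posSupport.1).trans hlt)
  exact (card_le_card hsub).trans_lt (card_erase_lt_of_mem hi₀)

end posSupport

lemma edgeMinSum_le_maxDensity_mul_sum [Fintype V] (G : SimpleGraph V) (u : V → ℝ)
    (hu : ∀ i, 0 ≤ u i) : edgeMinSum G u ≤ maxDensity G * ∑ i, u i := by
  induction hn : (posSupport u).card using Nat.strong_induction_on generalizing u with
  | _ n ih =>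
  rcases (posSupport u).eq_empty_or_nonempty with hempty | hne
  · simp [posSupport_eq_empty hu hempty, edgeMinSum_zero]
  set S := posSupport u
  set m := S.inf' hne u
  have hm : 0 < m := (lt_inf'_iff hne).2 fun _ => mem_posSupport.1
  have hlow : (fun i => min (u i) m) = fun i => if i ∈ S then m else 0 :=
    funext (min_inf'_posSupport hu hne)
  set u' : V → ℝ := fun i => max (u i - m) 0
  have hIH : edgeMinSum G u' ≤ maxDensity G * ∑ i, u' i :=
    ih _ (hn ▸ card_posSupport_posPart_sub_inf'_lt hne) u' (fun _ => le_max_right _ _) rfl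
  have hsplit : edgeMinSum G u = edgeMinSum G u' + m * edgesIn G S := by
    rw [edgeMinSum_eq_posPart_sub_add_min G u m, hlow, edgeMinSum_ite_mem G S hm.le]
  have hsum : ∑ i, u i = ∑ i, u' i + m * S.card :=
    calc ∑ i, u i = ∑ i, (u' i + min (u i) m) := by simp only [u', posPart_sub_add_min]
      _ = ∑ i, u' i + ∑ i, if i ∈ S then m else 0 := by rw [sum_add_distrib, hlow]
      _ = ∑ i, u' i + m * S.card := by
        rw [sum_ite_mem, univ_inter, sum_const, nsmul_eq_mul, mul_comm]
  have hdense := mul_le_mul_of_nonneg_left (edgesIn_le_maxDensity_mul_card G hne) hm.le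
  rw [hsplit, hsum, mul_add]
  linarith

theorem stmt2 [Fintype V] (G : SimpleGraph V) (u : V → ℝ) (hu : ∀ i, 0 ≤ u i) :
    ∑ e ∈ G.edgeFinset,
        Sym2.lift ⟨fun i j => min (u i) (u j), fun i j => min_comm (u i) (u j)⟩ e
      ≤ maxDensity G * ∑ i, u i :=
  edgeMinSum_le_maxDensity_mul_sum G u hu
end

section
/- Let G = (V,E) be a finite simple graph and let S ⊆ V be nonempty. Then there exist an integer c ≥ 1, nonnegative edge weights w and nonnegative individual preferences q such that the resulting symmetric coordination game on G with c colors and the equal-split distribution rule has a pure Nash equilibrium s with u(s) = |S| and a strategy profile s* with u(s*) = |S| + 2|E[S]|; hence u(s*)/u(s) = 1 + 2|E[S]|/|S|. In particular, for every graph G the Price of Anarchy over symmetric coordination games on G with equal-split distribution rule is at least 1 + 2·ρ(G). -/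
open Finset
open scoped Classical

variable {V : Type*}

/-!
Give every player a private color `s i ≠ 0`, let the players of `S` value exactly their private
color and the common color `0` at `1`, and put weight `2` on the edges inside `S`. In the profile
of private colors no edge is satisfied, and a deviation of a player in `S` either keeps a
preference of `1` and satisfies no edge, or gives up its preference to satisfy at most one edge,
worth `1`: this is a Nash equilibrium of welfare `|S|`. When everybody plays `0`, the players of
`S` keep their preference and each edge inside `S` adds `2`.
-/

namespace SimpleGraph

variable [Fintype V] (G : SimpleGraph V)

theorem sum_card_filter_neighborFinset_mem (S : Finset V) :
    ∑ i, #((G.neighborFinset i).filter fun j => i ∈ S ∧ j ∈ S) = 2 * edgesIn G S := by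
  set H := ((⊤ : G.Subgraph).induce (S : Set V)).spanningCoe
  have hdeg : ∀ i, H.degree i = #((G.neighborFinset i).filter fun j => i ∈ S ∧ j ∈ S) := by
    intro i
    rw [← card_neighborFinset_eq_degree]
    congr 1
    ext j
    simp [H, and_rotate]
  have hedges : #H.edgeFinset = edgesIn G S := by
    unfold edgesIn
    congr 1
    ext e
    induction e using Sym2.ind
    simp [H, and_rotate]
  simp_rw [← hdeg, ← hedges]
  convert H.sum_degrees_eq_twice_card_edges

end SimpleGraph

section EqualSplit

variable [Fintype V] (G : SimpleGraph V)

theorem util_equalSplit (w : V → V → ℝ) {c : ℕ} (q : V → Fin c → ℝ) (s : V → Fin c) (i : V) :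
    util G (fun _ _ => True) (fun _ _ => 1) w q s i = q i (s i) + utilA G w s i := by
  unfold util utilA
  congr 1
  refine Finset.sum_congr rfl fun j _ => ?_
  simp only [true_and, not_true_eq_false, false_and, or_false]
  split_ifs <;> ring

theorem welfare_equalSplit (w : V → V → ℝ) {c : ℕ} (q : V → Fin c → ℝ) (s : V → Fin c) :
    welfare G (fun _ _ => True) (fun _ _ => 1) w q s = ∑ i, q i (s i) + welfareA G w s := by
  simp only [welfare, welfareA, util_equalSplit, Finset.sum_add_distrib]

theorem utilA_update_self (w : V → V → ℝ) {c : ℕ} (s : V → Fin c) (i : V) (k : Fin c) :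
    utilA G w (Function.update s i k) i =
      ∑ j ∈ G.neighborFinset i, if k = s j then w i j / 2 else 0 := by
  refine Finset.sum_congr rfl fun j hj => ?_
  rw [Function.update_self, Function.update_of_ne ((G.mem_neighborFinset i j).1 hj).ne']

theorem utilA_update_eq_zero (w : V → V → ℝ) {c : ℕ} (s : V → Fin c) (i : V) (k : Fin c)
    (hk : ∀ j ∈ G.neighborFinset i, s j ≠ k) : utilA G w (Function.update s i k) i = 0 := by
  rw [utilA_update_self]
  exact Finset.sum_eq_zero fun j hj => if_neg (hk j hj).symm

theorem utilA_eq_zero_of_injective (w : V → V → ℝ) {c : ℕ} {s : V → Fin c}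
    (hs : Function.Injective s) (i : V) : utilA G w s i = 0 := by
  simpa using utilA_update_eq_zero G w s i (s i)
    fun j hj => hs.ne ((G.mem_neighborFinset i j).1 hj).ne'

theorem welfareA_eq_zero_of_injective (w : V → V → ℝ) {c : ℕ} {s : V → Fin c}
    (hs : Function.Injective s) : welfareA G w s = 0 :=
  Finset.sum_eq_zero fun i _ => utilA_eq_zero_of_injective G w hs i

theorem utilA_update_le_of_injective (w : V → V → ℝ) {c : ℕ} {s : V → Fin c}
    (hs : Function.Injective s) (i : V) (k : Fin c) {M : ℝ} (hM : 0 ≤ M)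
    (hw : ∀ j, w i j / 2 ≤ M) : utilA G w (Function.update s i k) i ≤ M := by
  rw [utilA_update_self, ← Finset.sum_filter]
  have hcard : #((G.neighborFinset i).filter fun j => k = s j) ≤ 1 :=
    Finset.card_le_one.2 fun a ha b hb =>
      hs ((Finset.mem_filter.1 ha).2.symm.trans (Finset.mem_filter.1 hb).2)
  calc ∑ j ∈ (G.neighborFinset i).filter (fun j => k = s j), w i j / 2
      ≤ #((G.neighborFinset i).filter fun j => k = s j) • M :=
        Finset.sum_le_card_nsmul _ _ _ fun j _ => hw j
    _ ≤ 1 • M := nsmul_le_nsmul_left hM hcard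
    _ = M := one_nsmul M

end EqualSplit

section Construction

noncomputable def weightOn (S : Finset V) : V → V → ℝ :=
  fun i j => if i ∈ S ∧ j ∈ S then 2 else 0

noncomputable def preferenceOn (S : Finset V) {c : ℕ} (s : V → Fin (c + 1)) :
    V → Fin (c + 1) → ℝ :=
  fun i k => if i ∈ S ∧ (k = s i ∨ k = 0) then 1 else 0

theorem weightOn_nonneg (S : Finset V) (i j : V) : 0 ≤ weightOn S i j := by
  unfold weightOn; split_ifs <;> norm_num

theorem weightOn_comm (S : Finset V) (i j : V) : weightOn S i j = weightOn S j i := by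
  simp only [weightOn, and_comm]

theorem preferenceOn_nonneg (S : Finset V) {c : ℕ} (s : V → Fin (c + 1)) (i : V)
    (k : Fin (c + 1)) : 0 ≤ preferenceOn S s i k := by
  unfold preferenceOn; split_ifs <;> norm_num

variable [Fintype V] (G : SimpleGraph V) (S : Finset V)

theorem sum_preferenceOn {c : ℕ} (s : V → Fin (c + 1)) (t : V → Fin (c + 1))
    (ht : ∀ i, t i = s i ∨ t i = 0) : ∑ i, preferenceOn S s i (t i) = #S := by
  simp [preferenceOn, ht]

theorem welfareA_weightOn_const {c : ℕ} (k : Fin c) :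
    welfareA G (weightOn S) (fun _ => k) = 2 * edgesIn G S := by
  have h : ∀ i j, weightOn S i j / 2 = if i ∈ S ∧ j ∈ S then 1 else 0 := by
    intro i j; unfold weightOn; split_ifs <;> norm_num
  simp only [welfareA, utilA, if_true, h, Finset.sum_boole]
  exact_mod_cast G.sum_card_filter_neighborFinset_mem S

theorem isNash_preferenceOn {c : ℕ} {s : V → Fin (c + 1)} (hs : Function.Injective s)
    (hs0 : ∀ i, s i ≠ 0) :
    IsNash G (fun _ _ => True) (fun _ _ => 1) (weightOn S) (preferenceOn S s) s := by
  intro i k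
  rw [util_equalSplit, util_equalSplit, utilA_eq_zero_of_injective G _ hs, add_zero,
    Function.update_self]
  have hown : preferenceOn S s i (s i) = if i ∈ S then 1 else 0 := by simp [preferenceOn]
  rw [hown]
  by_cases hk : k = s i ∨ k = 0
  · rw [utilA_update_eq_zero G _ s i k fun j hj hjk => ?_, add_zero]
    · simp [preferenceOn, hk]
    rcases hk with rfl | rfl
    · exact hs.ne ((G.mem_neighborFinset i j).1 hj).ne' hjk
    · exact hs0 j hjk
  · have hM : (0 : ℝ) ≤ if i ∈ S then 1 else 0 := by split_ifs <;> norm_num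
    have hw : ∀ j, weightOn S i j / 2 ≤ if i ∈ S then 1 else 0 := by
      intro j; unfold weightOn; split_ifs <;> simp_all
    rw [preferenceOn, if_neg fun h => hk h.2, zero_add]
    exact utilA_update_le_of_injective G (weightOn S) hs i k hM hw

end Construction

theorem stmt5_general [Fintype V] (G : SimpleGraph V) (S : Finset V) :
    ∃ (c : ℕ), 1 ≤ c ∧
      ∃ (w : V → V → ℝ) (q : V → Fin c → ℝ),
        (∀ i j, 0 ≤ w i j) ∧ (∀ i j, w i j = w j i) ∧ (∀ i k, 0 ≤ q i k) ∧
        ∃ s : V → Fin c,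
          IsNash G (fun _ _ => True) (fun _ _ => 1) w q s ∧
          welfare G (fun _ _ => True) (fun _ _ => 1) w q s = S.card ∧
          ∃ sstar : V → Fin c,
            welfare G (fun _ _ => True) (fun _ _ => 1) w q sstar =
              S.card + 2 * edgesIn G S := by
  let s : V → Fin (Fintype.card V + 1) := fun i => (Fintype.equivFin V i).succ
  have hs : Function.Injective s := fun i j h =>
    (Fintype.equivFin V).injective (Fin.succ_injective _ h)
  have hs0 : ∀ i, s i ≠ 0 := fun i => Fin.succ_ne_zero _
  refine ⟨Fintype.card V + 1, Nat.le_add_left 1 _, weightOn S, preferenceOn S s,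
    weightOn_nonneg S, weightOn_comm S, preferenceOn_nonneg S s, s,
    isNash_preferenceOn G S hs hs0, ?_, fun _ => 0, ?_⟩
  · rw [welfare_equalSplit, welfareA_eq_zero_of_injective G _ hs,
      sum_preferenceOn S s s fun _ => Or.inl rfl, add_zero]
  · rw [welfare_equalSplit, welfareA_weightOn_const,
      sum_preferenceOn S s _ fun _ => Or.inr rfl]

theorem stmt5 [Fintype V] (G : SimpleGraph V) (S : Finset V) (hS : S.Nonempty) :
    ∃ (c : ℕ), 1 ≤ c ∧
      ∃ (w : V → V → ℝ) (q : V → Fin c → ℝ),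
        (∀ i j, 0 ≤ w i j) ∧ (∀ i j, w i j = w j i) ∧ (∀ i k, 0 ≤ q i k) ∧
        ∃ s : V → Fin c,
          IsNash G (fun _ _ => True) (fun _ _ => 1) w q s ∧
          welfare G (fun _ _ => True) (fun _ _ => 1) w q s = S.card ∧
          ∃ sstar : V → Fin c,
            welfare G (fun _ _ => True) (fun _ _ => 1) w q sstar =
              S.card + 2 * edgesIn G S :=
  stmt5_general G S
end

section
/- Let Γ be a symmetric clustering game on a finite simple graph G = (V, E_c ∪ E_a) with c ≥ 2 colors and the equal-split distribution rule, and let s be a pure Nash equilibrium of Γ. Then the total weight of all anti-coordination edges satisfies Σ_{e ∈ E_a} w_e ≤ 4·Σ_{i∈V} u_i(s). -/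
open Finset
open scoped Classical

variable {V : Type*}

/-!
Fix a player `i` and let `A` be the weight of the anti-coordination edges at `i`. Averaging her
utility over all `c` unilateral deviations, each anti-coordination edge at `i` is satisfied by
`c - 1` of them, so the average is at least `(c - 1) / c · A / 2`. At a Nash equilibrium the
average is at most `u_i(s)`, hence `A ≤ 2c / (c - 1) · u_i(s) ≤ 4 u_i(s)` for `c ≥ 2`;
summing over the players gives the bound.
-/

section ClusteringGame

variable [Fintype V] (G : SimpleGraph V) (coord : V → V → Prop) (α w : V → V → ℝ)
  {c : ℕ} (q : V → Fin c → ℝ) (s : V → Fin c)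

theorem util_nonneg (hα : ∀ i j, 0 ≤ α i j) (hw : ∀ i j, 0 ≤ w i j) (hq : ∀ i k, 0 ≤ q i k)
    (i : V) : 0 ≤ util G coord α w q s i := by
  refine add_nonneg (hq i _) (sum_nonneg fun j _ => ?_)
  split_ifs
  · exact mul_nonneg (div_nonneg (hα i j) (add_nonneg (hα i j) (hα j i))) (hw i j)
  · exact le_rfl

theorem util_update_self (i : V) (k : Fin c) :
    util G coord α w q (Function.update s i k) i =
      q i k + ∑ j ∈ G.neighborFinset i,
        if (coord i j ∧ k = s j) ∨ (¬ coord i j ∧ k ≠ s j)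
        then α i j / (α i j + α j i) * w i j else 0 := by
  unfold util
  rw [Function.update_self]
  refine congrArg _ (sum_congr rfl fun j hj => ?_)
  rw [Function.update_of_ne (G.ne_of_adj ((G.mem_neighborFinset i j).1 hj)).symm]

theorem Fin.sum_ite_ne_eq_sub_one_mul {R : Type*} [Ring R] (a : Fin c) (x : R) :
    ∑ k : Fin c, (if k ≠ a then x else 0) = (c - 1) * x := by
  have hc : 1 ≤ c := Nat.one_le_of_lt a.pos
  simp [Finset.sum_ite, Finset.filter_ne', Finset.card_erase_of_mem, Nat.cast_sub hc]

/-- Each anti-coordination edge at `i` is satisfied by all but one of the `c` colours. -/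
theorem sub_one_mul_antiShare_le_sum_util_update (hα : ∀ i j, 0 ≤ α i j) (hw : ∀ i j, 0 ≤ w i j)
    (hq : ∀ i k, 0 ≤ q i k) (i : V) :
    (c - 1) * ∑ j ∈ G.neighborFinset i,
        (if coord i j then 0 else α i j / (α i j + α j i) * w i j) ≤
      ∑ k : Fin c, util G coord α w q (Function.update s i k) i := by
  simp_rw [util_update_self, sum_add_distrib, mul_sum]
  rw [sum_comm]
  refine le_add_of_nonneg_of_le (sum_nonneg fun k _ => hq i k) (sum_le_sum fun j _ => ?_)
  have hshare : 0 ≤ α i j / (α i j + α j i) * w i j :=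
    mul_nonneg (div_nonneg (hα i j) (add_nonneg (hα i j) (hα j i))) (hw i j)
  by_cases hcj : coord i j
  · simp only [hcj, if_true, mul_zero]
    exact sum_nonneg fun k _ => by split_ifs <;> simp [hshare]
  · simp only [hcj, if_false, false_and, false_or, not_false_eq_true, true_and]
    rw [Fin.sum_ite_ne_eq_sub_one_mul]

variable {G coord α w q s}

theorem IsNash.sum_util_update_le (hs : IsNash G coord α w q s) (i : V) :
    ∑ k : Fin c, util G coord α w q (Function.update s i k) i ≤ c * util G coord α w q s i := by
  simpa using sum_le_card_nsmul univ _ _ fun k _ => hs i k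

theorem IsNash.antiWeight_le_four_mul_util (hc : 2 ≤ c) (hw : ∀ i j, 0 ≤ w i j)
    (hq : ∀ i k, 0 ≤ q i k) (hs : IsNash G coord (fun _ _ => 1) w q s) (i : V) :
    ∑ j ∈ G.neighborFinset i, (if coord i j then 0 else w i j) ≤
      4 * util G coord (fun _ _ => 1) w q s i := by
  have hα : ∀ i j : V, (0 : ℝ) ≤ (fun _ _ => 1) i j := fun _ _ => zero_le_one
  have hlow := sub_one_mul_antiShare_le_sum_util_update G coord _ w q s hα hw hq i
  have hup := hs.sum_util_update_le i
  have hu := util_nonneg G coord _ w q s hα hw hq i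
  have hc' : (2 : ℝ) ≤ c := by exact_mod_cast hc
  have hhalf : ∑ j ∈ G.neighborFinset i, (if coord i j then 0 else 1 / (1 + 1) * w i j) =
      (1 / 2) * ∑ j ∈ G.neighborFinset i, (if coord i j then 0 else w i j) := by
    rw [mul_sum]; refine sum_congr rfl fun j _ => ?_; split_ifs <;> norm_num
  rw [hhalf] at hlow
  -- `(c - 1) / 2 * A ≤ c * u ≤ 2 * (c - 1) * u`, since `c ≤ 2 * (c - 1)` for `c ≥ 2`
  nlinarith

end ClusteringGame

theorem stmt7_general [Fintype V] (G : SimpleGraph V) (coord : V → V → Prop)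
    (c : ℕ) (hc : 2 ≤ c)
    (w : V → V → ℝ) (q : V → Fin c → ℝ)
    (hw : ∀ i j, 0 ≤ w i j)
    (hq : ∀ i k, 0 ≤ q i k)
    (s : V → Fin c)
    (hs : IsNash G coord (fun _ _ => 1) w q s) :
    (1 / 2) * ∑ i, ∑ j ∈ G.neighborFinset i, (if coord i j then 0 else w i j) ≤
      4 * ∑ i, util G coord (fun _ _ => 1) w q s i := by
  have hanti : 0 ≤ ∑ i, ∑ j ∈ G.neighborFinset i, (if coord i j then 0 else w i j) :=
    sum_nonneg fun i _ => sum_nonneg fun j _ => by split_ifs <;> simp [hw i j]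
  calc (1 / 2) * ∑ i, ∑ j ∈ G.neighborFinset i, (if coord i j then 0 else w i j)
      ≤ ∑ i, ∑ j ∈ G.neighborFinset i, (if coord i j then 0 else w i j) := by linarith
    _ ≤ 4 * ∑ i, util G coord (fun _ _ => 1) w q s i := by
      rw [mul_sum]
      exact sum_le_sum fun i _ => hs.antiWeight_le_four_mul_util hc hw hq i

theorem stmt7 [Fintype V] (G : SimpleGraph V) (coord : V → V → Prop)
    (hcoord : ∀ i j, coord i j ↔ coord j i)
    (c : ℕ) (hc : 2 ≤ c)
    (w : V → V → ℝ) (q : V → Fin c → ℝ)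
    (hw : ∀ i j, 0 ≤ w i j) (hwsymm : ∀ i j, w i j = w j i)
    (hq : ∀ i k, 0 ≤ q i k)
    (s : V → Fin c)
    (hs : IsNash G coord (fun _ _ => 1) w q s) :
    (1 / 2) * ∑ i, ∑ j ∈ G.neighborFinset i, (if coord i j then 0 else w i j) ≤
      4 * ∑ i, util G coord (fun _ _ => 1) w q s i :=
  stmt7_general G coord c hc w q hw hq s hs
end

section
/- Let G = (V,E) be a finite simple graph, let M ⊆ E be a matching of size q ≥ 1 with set of matched vertices V_M, and let c ≥ q. Then there exist nonnegative edge weights w such that the symmetric coordination game on G with c colors, equal-split distribution rule and zero individual preferences has a pure Nash equilibrium s with u(s) > 0 and a strategy profile s* with u(s*)/u(s) ≥ |E[V_M]|/(2q), where E[V_M] is the set of edges of G with both endpoints in V_M. -/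
open Finset
open scoped Classical

variable {V : Type*}

/-! Give every matching edge weight 2, every other edge inside `V_M` weight 1 and all remaining
edges weight 0, and colour the two endpoints of each matching edge with a colour of their own
(possible since `c ≥ q`). Every matched vertex then earns exactly 1 from its partner, while a
deviation to another colour meets at most the two endpoints of one other matching edge, through
edges of weight 1, and so earns at most 1: this is an equilibrium of welfare `|V_M| ≤ 2q`. Giving
all vertices one colour satisfies every edge, for a welfare of at least `|E[V_M]|`. -/

section Welfare

variable [Fintype V] (G : SimpleGraph V)

theorem util_coordination_eq_utilA (w : V → V → ℝ) {c : ℕ} (s : V → Fin c) (i : V) :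
    util G (fun _ _ => True) (fun _ _ => 1) w (fun _ _ => 0) s i = utilA G w s i := by
  refine (zero_add _).trans (sum_congr rfl fun j _ => ?_)
  simp only [true_and, not_true, false_and, or_false]
  split_ifs <;> ring

theorem welfare_coordination_eq_welfareA (w : V → V → ℝ) {c : ℕ} (s : V → Fin c) :
    welfare G (fun _ _ => True) (fun _ _ => 1) w (fun _ _ => 0) s = welfareA G w s :=
  sum_congr rfl fun i _ => util_coordination_eq_utilA G w s i

theorem utilA_eq_zero_of_forall_eq_zero (w : V → V → ℝ) {c : ℕ} (s : V → Fin c) {i : V}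
    (hi : ∀ j, w i j = 0) : utilA G w s i = 0 :=
  sum_eq_zero fun j _ => by simp [hi j]

theorem sum_darts_eq_sum_neighborFinset (F : V → V → ℝ) :
    ∑ d : G.Dart, F d.fst d.snd = ∑ i, ∑ j ∈ G.neighborFinset i, F i j := by
  let e : G.Dart ≃ Σ i : V, G.neighborSet i :=
    { toFun := fun d => ⟨d.fst, d.snd, d.adj⟩
      invFun := fun p => ⟨(p.1, p.2), p.2.2⟩ }
  rw [← e.symm.sum_comp, ← univ_sigma_univ, sum_sigma]
  exact sum_congr rfl fun i _ => by rw [G.neighborFinset_def, ← sum_set_coe]; rfl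

theorem edgesIn_le_sum_neighborFinset (S : Finset V) (F : V → V → ℝ)
    (hF : ∀ i j, 0 ≤ F i j)
    (hS : ∀ i j, G.Adj i j → i ∈ S → j ∈ S → 1 ≤ F i j + F j i) :
    (edgesIn G S : ℝ) ≤ ∑ i, ∑ j ∈ G.neighborFinset i, F i j := by
  rw [← sum_darts_eq_sum_neighborFinset, ← sum_fiberwise_of_maps_to (t := G.edgeFinset)
    (fun d _ => G.mem_edgeFinset.2 d.edge_mem)]
  calc (edgesIn G S : ℝ)
      = ∑ e ∈ G.edgeFinset.filter (fun e => ∀ v ∈ e, v ∈ S), (1 : ℝ) := by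
        simp [edgesIn]
    _ ≤ ∑ e ∈ G.edgeFinset.filter (fun e => ∀ v ∈ e, v ∈ S),
          ∑ d : G.Dart with d.edge = e, F d.fst d.snd := by
        refine sum_le_sum fun e he => ?_
        obtain ⟨he, heS⟩ := mem_filter.1 he
        induction e with | h a b => ?_
        let d : G.Dart := ⟨(a, b), G.mem_edgeFinset.1 he⟩
        rw [show s(a, b) = d.edge from rfl, d.edge_fiber, sum_pair d.symm_ne.symm]
        exact hS a b d.adj (heS a (Sym2.mem_mk_left a b)) (heS b (Sym2.mem_mk_right a b))
    _ ≤ ∑ e ∈ G.edgeFinset, ∑ d : G.Dart with d.edge = e, F d.fst d.snd :=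
        sum_le_sum_of_subset_of_nonneg (filter_subset _ _)
          fun _ _ _ => sum_nonneg fun _ _ => hF _ _

theorem edgesIn_le_welfareA_const (S : Finset V) (w : V → V → ℝ) (hw : ∀ i j, 0 ≤ w i j)
    (hw_comm : ∀ i j, w i j = w j i)
    (hS : ∀ i j, G.Adj i j → i ∈ S → j ∈ S → 1 ≤ w i j)
    {c : ℕ} (k : Fin c) : (edgesIn G S : ℝ) ≤ welfareA G w (fun _ => k) := by
  simp only [welfareA, utilA, if_true]
  refine edgesIn_le_sum_neighborFinset G S _ (fun i j => div_nonneg (hw i j) two_pos.le)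
    fun i j hij hi hj => ?_
  rw [← hw_comm i j]
  linarith [hS i j hij hi hj]

end Welfare

theorem Sym2.card_toFinset_le_two {α : Type*} [DecidableEq α] (e : Sym2 α) :
    #e.toFinset ≤ 2 := by
  rw [Sym2.card_toFinset]
  split_ifs <;> omega

section Matching

variable {M : Finset (Sym2 V)} {VM : Finset V} (hVM : ∀ v, v ∈ VM ↔ ∃ e ∈ M, v ∈ e)
  (hMmatch : ∀ e ∈ M, ∀ f ∈ M, e ≠ f → ∀ v, v ∈ e → v ∉ f)

include hVM in
theorem card_le_two_mul_card_of_forall_mem_iff : #VM ≤ 2 * #M := by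
  have hsub : VM ⊆ M.biUnion Sym2.toFinset := fun v hv => by
    simpa only [mem_biUnion, Sym2.mem_toFinset] using (hVM v).1 hv
  calc #VM ≤ #(M.biUnion Sym2.toFinset) := card_le_card hsub
    _ ≤ ∑ e ∈ M, #e.toFinset := card_biUnion_le
    _ ≤ ∑ _e ∈ M, 2 := sum_le_sum fun e _ => e.card_toFinset_le_two
    _ = 2 * #M := by rw [sum_const, smul_eq_mul, mul_comm]

variable (M VM) in
noncomputable def matchingWeight (i j : V) : ℝ :=
  if s(i, j) ∈ M then 2 else if i ∈ VM ∧ j ∈ VM then 1 else 0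

theorem matchingWeight_nonneg (i j : V) : 0 ≤ matchingWeight M VM i j := by
  unfold matchingWeight
  split_ifs <;> norm_num

theorem matchingWeight_comm (i j : V) : matchingWeight M VM i j = matchingWeight M VM j i := by
  simp only [matchingWeight, Sym2.eq_swap, and_comm]

theorem one_le_matchingWeight {i j : V} (hi : i ∈ VM) (hj : j ∈ VM) :
    1 ≤ matchingWeight M VM i j := by
  unfold matchingWeight
  split_ifs <;> simp_all

theorem matchingWeight_le_one {i j : V} (h : s(i, j) ∉ M) : matchingWeight M VM i j ≤ 1 := by
  unfold matchingWeight
  split_ifs <;> norm_num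

include hVM in
theorem matchingWeight_eq_zero {i : V} (hi : i ∉ VM) (j : V) : matchingWeight M VM i j = 0 := by
  have hM : s(i, j) ∉ M := fun h => hi ((hVM i).2 ⟨_, h, Sym2.mem_mk_left i j⟩)
  simp [matchingWeight, hM, hi]

noncomputable def matchingColoring (M : Finset (Sym2 V)) {c : ℕ} (φ : M ↪ Fin c) (k₀ : Fin c)
    (v : V) : Fin c :=
  if h : ∃ e ∈ M, v ∈ e then φ ⟨h.choose, h.choose_spec.1⟩ else k₀

variable {c : ℕ} {φ : M ↪ Fin c} {k₀ : Fin c}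

include hMmatch in
theorem matchingColoring_eq {e : Sym2 V} (he : e ∈ M) {v : V} (hv : v ∈ e) :
    matchingColoring M φ k₀ v = φ ⟨e, he⟩ := by
  have h : ∃ e ∈ M, v ∈ e := ⟨e, he, hv⟩
  rw [matchingColoring, dif_pos h]
  congr
  by_contra hne
  exact hMmatch _ h.choose_spec.1 e he hne v h.choose_spec.2 hv

include hVM hMmatch

theorem mem_of_matchingColoring_eq {e : Sym2 V} (he : e ∈ M) {i j : V} (hi : i ∈ e)
    (hj : j ∈ VM) (hij : matchingColoring M φ k₀ j = matchingColoring M φ k₀ i) :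
    j ∈ e := by
  obtain ⟨f, hf, hjf⟩ := (hVM j).1 hj
  rw [matchingColoring_eq hMmatch hf hjf, matchingColoring_eq hMmatch he hi] at hij
  cases congrArg Subtype.val (φ.injective hij)
  exact hjf

theorem card_filter_matchingColoring_le_two (k : Fin c) :
    #(VM.filter (matchingColoring M φ k₀ · = k)) ≤ 2 := by
  rcases (VM.filter (matchingColoring M φ k₀ · = k)).eq_empty_or_nonempty with
    hempty | ⟨i, hi⟩
  · simp [hempty]
  obtain ⟨hiVM, rfl⟩ := mem_filter.1 hi
  obtain ⟨e, he, hie⟩ := (hVM i).1 hiVM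
  refine (card_le_card fun j hj => ?_).trans e.card_toFinset_le_two
  obtain ⟨hjVM, hji⟩ := mem_filter.1 hj
  exact Sym2.mem_toFinset.2 (mem_of_matchingColoring_eq hVM hMmatch he hie hjVM hji)

variable [Fintype V] (G : SimpleGraph V) (hMsub : ∀ e ∈ M, e ∈ G.edgeFinset)
include hMsub

theorem utilA_matchingColoring {i : V} (hi : i ∈ VM) :
    utilA G (matchingWeight M VM) (matchingColoring M φ k₀) i = 1 := by
  obtain ⟨e, he, hie⟩ := (hVM i).1 hi
  obtain ⟨p, rfl⟩ : ∃ p, s(i, p) = e := ⟨_, Sym2.other_spec hie⟩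
  have hip : G.Adj i p := G.mem_edgeFinset.1 (hMsub _ he)
  have hsp : matchingColoring M φ k₀ i = matchingColoring M φ k₀ p := by
    rw [matchingColoring_eq hMmatch he hie, matchingColoring_eq hMmatch he (Sym2.mem_mk_right i p)]
  rw [utilA, sum_eq_single p, if_pos hsp, matchingWeight, if_pos he]
  · norm_num
  · intro j hj hjp
    have hij : i ≠ j := G.ne_of_adj ((G.mem_neighborFinset i j).1 hj)
    split_ifs with hsj
    · by_cases hjVM : j ∈ VM
      · have := mem_of_matchingColoring_eq hVM hMmatch he hie hjVM hsj.symm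
        rcases Sym2.mem_iff.1 this with rfl | rfl <;> contradiction
      · simp [matchingWeight_comm i j, matchingWeight_eq_zero hVM hjVM]
    · rfl
  · exact fun hp => absurd ((G.mem_neighborFinset i p).2 hip) hp

theorem utilA_update_matchingColoring_le_one {i : V} (hi : i ∈ VM) (k : Fin c) :
    utilA G (matchingWeight M VM) (Function.update (matchingColoring M φ k₀) i k) i ≤ 1 := by
  set χ := matchingColoring M φ k₀
  by_cases hk : k = χ i
  · rw [hk, Function.update_eq_self, utilA_matchingColoring hVM hMmatch G hMsub hi]
  set T := VM.filter (χ · = k)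
  -- a neighbour of colour `k ≠ χ i` is not matched to `i`, so its edge has weight at most 1
  have hterm : ∀ j ∈ G.neighborFinset i,
      (if k = χ j then matchingWeight M VM i j / 2 else 0) ≤ if j ∈ T then 1 / 2 else 0 := by
    intro j _
    by_cases hkj : k = χ j
    · by_cases hjT : j ∈ T
      · have hM : s(i, j) ∉ M := fun hM => hk <| hkj.trans <|
          (matchingColoring_eq hMmatch hM (Sym2.mem_mk_right i j)).trans
            (matchingColoring_eq hMmatch hM (Sym2.mem_mk_left i j)).symm
        simp only [if_pos hkj, if_pos hjT]
        linarith [matchingWeight_le_one (VM := VM) hM]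
      · have hjVM : j ∉ VM := fun hjVM => hjT (mem_filter.2 ⟨hjVM, hkj.symm⟩)
        simp [hjT, matchingWeight_comm i j, matchingWeight_eq_zero hVM hjVM]
    · simp only [if_neg hkj]
      split_ifs <;> norm_num
  have hT : (#T : ℝ) ≤ 2 := by exact_mod_cast card_filter_matchingColoring_le_two hVM hMmatch k
  calc utilA G (matchingWeight M VM) (Function.update χ i k) i
      ≤ ∑ j ∈ G.neighborFinset i, if j ∈ T then (1 : ℝ) / 2 else 0 := by
        rw [utilA_update_self]
        exact sum_le_sum hterm
    _ = ∑ j ∈ G.neighborFinset i ∩ T, (1 : ℝ) / 2 := sum_ite_mem _ _ _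
    _ ≤ ∑ j ∈ T, (1 : ℝ) / 2 :=
        sum_le_sum_of_subset_of_nonneg inter_subset_right fun _ _ _ => by norm_num
    _ ≤ 1 := by
        rw [sum_const, nsmul_eq_mul]
        linarith

theorem isNash_matchingColoring :
    IsNash G (fun _ _ => True) (fun _ _ => 1) (matchingWeight M VM) (fun _ _ => 0)
      (matchingColoring M φ k₀) := by
  intro i k
  simp only [util_coordination_eq_utilA]
  by_cases hi : i ∈ VM
  · rw [utilA_matchingColoring hVM hMmatch G hMsub hi]
    exact utilA_update_matchingColoring_le_one hVM hMmatch G hMsub hi k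
  · simp [utilA_eq_zero_of_forall_eq_zero G _ _ (matchingWeight_eq_zero hVM hi)]

theorem welfareA_matchingColoring :
    welfareA G (matchingWeight M VM) (matchingColoring M φ k₀) = #VM := by
  have hutil : ∀ i, utilA G (matchingWeight M VM) (matchingColoring M φ k₀) i =
      if i ∈ VM then 1 else 0 := fun i => by
    split_ifs with hi
    · exact utilA_matchingColoring hVM hMmatch G hMsub hi
    · exact utilA_eq_zero_of_forall_eq_zero G _ _ (matchingWeight_eq_zero hVM hi)
  simp only [welfareA, hutil, sum_ite_mem, univ_inter, sum_const, nsmul_eq_mul, mul_one]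

end Matching

theorem stmt8 [Fintype V] (G : SimpleGraph V) (M : Finset (Sym2 V))
    (hMsub : ∀ e ∈ M, e ∈ G.edgeFinset)
    (hMmatch : ∀ e ∈ M, ∀ f ∈ M, e ≠ f → ∀ v, v ∈ e → v ∉ f)
    (hMcard : 1 ≤ M.card)
    (VM : Finset V) (hVM : ∀ v, v ∈ VM ↔ ∃ e ∈ M, v ∈ e)
    (c : ℕ) (hc : M.card ≤ c) :
    ∃ w : V → V → ℝ, (∀ i j, 0 ≤ w i j) ∧ (∀ i j, w i j = w j i) ∧
      ∃ s : V → Fin c,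
        IsNash G (fun _ _ => True) (fun _ _ => 1) w (fun _ _ => 0) s ∧
        0 < welfare G (fun _ _ => True) (fun _ _ => 1) w (fun _ _ => 0) s ∧
        ∃ sstar : V → Fin c,
          (edgesIn G VM : ℝ) / (2 * M.card) ≤
            welfare G (fun _ _ => True) (fun _ _ => 1) w (fun _ _ => 0) sstar /
              welfare G (fun _ _ => True) (fun _ _ => 1) w (fun _ _ => 0) s := by
  obtain ⟨φ⟩ : Nonempty (M ↪ Fin c) :=
    Function.Embedding.nonempty_of_card_le (by simpa using hc)
  let k₀ : Fin c := ⟨0, hMcard.trans hc⟩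
  have hVMpos : (0 : ℝ) < #VM := by
    obtain ⟨e, he⟩ := card_pos.1 hMcard
    exact_mod_cast card_pos.2 ⟨_, (hVM _).2 ⟨e, he, e.out_fst_mem⟩⟩
  have hVMle : (#VM : ℝ) ≤ 2 * #M := by
    exact_mod_cast card_le_two_mul_card_of_forall_mem_iff hVM
  have hwelfare := welfareA_matchingColoring hVM hMmatch G hMsub (φ := φ) (k₀ := k₀)
  refine ⟨matchingWeight M VM, matchingWeight_nonneg, matchingWeight_comm,
    matchingColoring M φ k₀, isNash_matchingColoring hVM hMmatch G hMsub, ?_,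
    fun _ => k₀, ?_⟩
  all_goals simp only [welfare_coordination_eq_welfareA, hwelfare]
  · exact hVMpos
  calc (edgesIn G VM : ℝ) / (2 * #M)
      ≤ edgesIn G VM / #VM := div_le_div_of_nonneg_left (Nat.cast_nonneg _) hVMpos hVMle
    _ ≤ welfareA G (matchingWeight M VM) (fun _ => k₀) / #VM := by
        gcongr
        exact edgesIn_le_welfareA_const G VM _ matchingWeight_nonneg matchingWeight_comm
          (fun i j _ hi hj => one_le_matchingWeight hi hj) k₀
end

section
/- Let G = (V,E) be a finite simple graph with at least one edge and chromatic number χ(G), and let c ≥ χ(G) + 1. Then there exist strategy sets S_i ⊆ [c] with |S_i| = 2 for each i ∈ V such that the resulting asymmetric coordination game on G with unit edge weights (w_e = 1 for all e ∈ E), equal-split distribution rule and no individual preferences has a pure Nash equilibrium s with u(s) = 0, while the profile s* in which every player plays a common color satisfies u(s*) = |E| > 0. In particular, the (ε,1)-Price of Anarchy over such games on G is unbounded for every ε ≥ 1. -/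
open Finset
open scoped Classical

variable {V : Type*}

/-!
Properly colour `G` with colours other than a reserved colour `k₀` (possible since `c ≥ χ(G) + 1`)
and let every player choose between its own colour and `k₀`. In the proper colouring no edge is
satisfied, and a single deviation to either allowed colour still meets no neighbour's colour, so it
is a Nash equilibrium of welfare `0`; everyone playing `k₀` satisfies all `|E|` edges.
-/

namespace SimpleGraph

variable {G : SimpleGraph V}

theorem exists_proper_avoiding_of_chromaticNumber_add_one_le {c : ℕ}
    (hc : G.chromaticNumber + 1 ≤ (c : ℕ∞)) :
    ∃ (s : V → Fin c) (k₀ : Fin c), (∀ i j, G.Adj i j → s i ≠ s j) ∧ ∀ i, s i ≠ k₀ := by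
  obtain ⟨m, rfl⟩ : ∃ m, c = m + 1 :=
    Nat.exists_eq_succ_of_ne_zero (by rintro rfl; simp at hc)
  have hm : G.Colorable m := by
    rw [← chromaticNumber_le_iff_colorable]
    exact (ENat.add_le_add_iff_right ENat.one_ne_top).1 (by exact_mod_cast hc)
  obtain ⟨C⟩ := hm
  exact ⟨fun i => (C i).succ, 0, fun i j hij h => C.valid hij (Fin.succ_injective _ h),
    fun i => Fin.succ_ne_zero _⟩

end SimpleGraph

section AsymmetricCoordination

variable [Fintype V] {G : SimpleGraph V} {c : ℕ}

theorem utilA_eq_zero {w : V → V → ℝ} {s : V → Fin c} {i : V}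
    (h : ∀ j, G.Adj i j → s i ≠ s j) : utilA G w s i = 0 :=
  Finset.sum_eq_zero fun j hj => if_neg (h j ((G.mem_neighborFinset i j).1 hj))

theorem welfareA_eq_zero {w : V → V → ℝ} {s : V → Fin c}
    (h : ∀ i j, G.Adj i j → s i ≠ s j) : welfareA G w s = 0 :=
  Finset.sum_eq_zero fun i _ => utilA_eq_zero (h i)

theorem isNashA_of_forall_adj_ne {w : V → V → ℝ} {St : V → Finset (Fin c)} {s : V → Fin c}
    (hs : ∀ i j, G.Adj i j → s i ≠ s j) (hSt : ∀ i, ∀ k ∈ St i, ∀ j, G.Adj i j → k ≠ s j) :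
    IsNashA G w St s := by
  intro i k hk
  rw [utilA_eq_zero (hs i), utilA_eq_zero]
  intro j hij
  rw [Function.update_self, Function.update_of_ne hij.ne']
  exact hSt i k hk j hij

theorem welfareA_const (a : ℝ) (k : Fin c) :
    welfareA G (fun _ _ => a) (fun _ => k) = a * G.edgeFinset.card := by
  have hdeg : (∑ i, G.degree i : ℝ) = 2 * G.edgeFinset.card := by
    exact_mod_cast G.sum_degrees_eq_twice_card_edges
  simp only [welfareA, utilA, if_true, Finset.sum_const, SimpleGraph.card_neighborFinset_eq_degree,
    nsmul_eq_mul, ← Finset.sum_mul, hdeg]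
  ring

end AsymmetricCoordination

theorem stmt9 [Fintype V] (G : SimpleGraph V)
    (hE : G.edgeFinset.Nonempty)
    (c : ℕ) (hc : G.chromaticNumber + 1 ≤ (c : ℕ∞)) :
    ∃ St : V → Finset (Fin c), (∀ i, (St i).card = 2) ∧
      ∃ s : V → Fin c, (∀ i, s i ∈ St i) ∧
        IsNashA G (fun _ _ => 1) St s ∧
        welfareA G (fun _ _ => 1) s = 0 ∧
        ∃ k0 : Fin c, (∀ i, k0 ∈ St i) ∧
          welfareA G (fun _ _ => 1) (fun _ => k0) = G.edgeFinset.card ∧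
          (0 : ℝ) < welfareA G (fun _ _ => 1) (fun _ => k0) := by
  obtain ⟨s, k₀, hs, hk₀⟩ := G.exists_proper_avoiding_of_chromaticNumber_add_one_le hc
  have hSt : ∀ i, ∀ k ∈ ({k₀, s i} : Finset (Fin c)), ∀ j, G.Adj i j → k ≠ s j := by
    intro i k hk j hij
    rw [Finset.mem_insert, Finset.mem_singleton] at hk
    rcases hk with rfl | rfl
    exacts [(hk₀ j).symm, hs i j hij]
  have hconst : welfareA G (fun _ _ => 1) (fun _ => k₀) = G.edgeFinset.card := by
    rw [welfareA_const, one_mul]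
  refine ⟨fun i => {k₀, s i}, fun i => Finset.card_pair (hk₀ i).symm, s, fun i => by simp,
    isNashA_of_forall_adj_ne hs hSt, welfareA_eq_zero hs, k₀, fun i => by simp, hconst, ?_⟩
  rw [hconst]
  exact_mod_cast hE.card_pos
end

section
/- Let ε ≥ 1 and k ≥ 2, and let Γ be an asymmetric coordination game on a finite simple graph G with equal-split distribution rule and no individual preferences. Then for every (ε,k)-equilibrium s of Γ and every strategy profile s*, u(s*) ≤ 2ε·Δ(G)·u(s), where Δ(G) is the maximum degree of G. -/
open Finset
open scoped Classical

variable {V : Type*}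

/-
If the edge `ij` is satisfied in `s*`, the coalition `{i, j}` can jointly switch to `s*`, after
which each of them earns at least `w_ij / 2`. As `s` is an `(ε, k)`-equilibrium with `k ≥ 2`, one
of them, `m`, earns at most `ε u_m(s)` after the switch, so `w_ij / 2 ≤ ε (u_i(s) + u_j(s))`.
Summing over the ordered satisfied edges of `s*` counts every `u_i(s)` exactly `2 deg i ≤ 2 Δ(G)`
times.
-/

namespace SimpleGraph

variable [Fintype V] (G : SimpleGraph V)

theorem sum_sum_neighborFinset_eq_sum_degree_smul {M : Type*} [AddCommMonoid M] (f : V → M) :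
    ∑ i, ∑ j ∈ G.neighborFinset i, f j = ∑ j, G.degree j • f j := by
  rw [sum_comm' (t' := univ) (s' := fun j => G.neighborFinset j) (by simp [adj_comm])]
  simp only [sum_const, card_neighborFinset_eq_degree]

theorem sum_sum_neighborFinset_add {R : Type*} [CommSemiring R] (f : V → R) :
    ∑ i, ∑ j ∈ G.neighborFinset i, (f i + f j) = 2 * ∑ i, (G.degree i : R) * f i := by
  simp only [sum_add_distrib, sum_const, card_neighborFinset_eq_degree,
    sum_sum_neighborFinset_eq_sum_degree_smul, nsmul_eq_mul]
  ring

theorem sum_degree_mul_le_maxDegree_mul_sum {f : V → ℝ} (hf : ∀ i, 0 ≤ f i) :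
    ∑ i, (G.degree i : ℝ) * f i ≤ G.maxDegree * ∑ i, f i := by
  rw [mul_sum]
  exact sum_le_sum fun i _ =>
    mul_le_mul_of_nonneg_right (by exact_mod_cast G.degree_le_maxDegree i) (hf i)

end SimpleGraph

section CoordinationGame

variable [Fintype V] {G : SimpleGraph V} {w : V → V → ℝ} {c : ℕ}

variable (G) in
theorem utilA_nonneg (hw : ∀ i j, 0 ≤ w i j) (s : V → Fin c) (i : V) : 0 ≤ utilA G w s i :=
  sum_nonneg fun j _ => by split_ifs <;> linarith [hw i j]

theorem half_weight_le_utilA (hw : ∀ i j, 0 ≤ w i j) {s : V → Fin c} {i j : V}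
    (hij : G.Adj i j) (hsat : s i = s j) : w i j / 2 ≤ utilA G w s i := by
  calc w i j / 2 = if s i = s j then w i j / 2 else 0 := (if_pos hsat).symm
    _ ≤ utilA G w s i :=
      single_le_sum (f := fun j => if s i = s j then w i j / 2 else 0)
        (fun x _ => by split_ifs <;> linarith [hw i x]) ((G.mem_neighborFinset i j).2 hij)

theorem IsEpsKEq.half_weight_le {St : V → Finset (Fin c)} {ε : ℝ} {k : ℕ} {s sstar : V → Fin c}
    (hs : IsEpsKEq G w St ε k s) (hk : 2 ≤ k) (hε : 0 ≤ ε) (hw : ∀ i j, 0 ≤ w i j)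
    (hwsymm : ∀ i j, w i j = w j i) (hsstar : ∀ i, sstar i ∈ St i) {i j : V}
    (hij : G.Adj i j) (hsat : sstar i = sstar j) :
    w i j / 2 ≤ ε * (utilA G w s i + utilA G w s j) := by
  set K : Finset V := {i, j}
  obtain ⟨m, hmK, hm⟩ := hs K (insert_nonempty _ _) (card_le_two.trans hk) (K.piecewise sstar s)
    (fun v hv => by rw [piecewise_eq_of_mem _ _ _ hv]; exact hsstar v)
    (fun v hv => piecewise_eq_of_notMem _ _ _ hv)
  have hmij : m = i ∨ m = j := by simpa [K] using hmK
  have hpair : K.piecewise sstar s i = K.piecewise sstar s j := by simp [K, hsat]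
  have hdev : w i j / 2 ≤ utilA G w (K.piecewise sstar s) m := by
    rcases hmij with rfl | rfl
    · exact half_weight_le_utilA hw hij hpair
    · rw [hwsymm]; exact half_weight_le_utilA hw hij.symm hpair.symm
  have hm_le : utilA G w s m ≤ utilA G w s i + utilA G w s j := by
    rcases hmij with rfl | rfl
    · linarith [utilA_nonneg G hw s j]
    · linarith [utilA_nonneg G hw s i]
  calc w i j / 2 ≤ utilA G w (K.piecewise sstar s) m := hdev
    _ ≤ ε * utilA G w s m := hm
    _ ≤ ε * (utilA G w s i + utilA G w s j) := mul_le_mul_of_nonneg_left hm_le hε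

end CoordinationGame

theorem stmt11_general [Fintype V] (G : SimpleGraph V)
    (ε : ℝ) (hε : 1 ≤ ε) (k : ℕ) (hk : 2 ≤ k)
    (c : ℕ) (St : V → Finset (Fin c))
    (w : V → V → ℝ) (hw : ∀ i j, 0 ≤ w i j) (hwsymm : ∀ i j, w i j = w j i)
    (s : V → Fin c)
    (hs : IsEpsKEq G w St ε k s)
    (sstar : V → Fin c) (hsstarv : ∀ i, sstar i ∈ St i) :
    welfareA G w sstar ≤ 2 * ε * (G.maxDegree : ℝ) * welfareA G w s := by
  set u := utilA G w s
  have hε0 : 0 ≤ ε := zero_le_one.trans hε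
  have hu : ∀ i, 0 ≤ u i := utilA_nonneg G hw s
  calc welfareA G w sstar ≤ ∑ i, ∑ j ∈ G.neighborFinset i, ε * (u i + u j) := by
        refine sum_le_sum fun i _ => sum_le_sum fun j hj => ?_
        split_ifs with hsat
        · exact hs.half_weight_le hk hε0 hw hwsymm hsstarv ((G.mem_neighborFinset i j).1 hj) hsat
        · exact mul_nonneg hε0 (add_nonneg (hu i) (hu j))
    _ = 2 * ε * ∑ i, (G.degree i : ℝ) * u i := by
        simp only [← mul_sum, G.sum_sum_neighborFinset_add]
        ring
    _ ≤ 2 * ε * (G.maxDegree * welfareA G w s) := by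
        gcongr
        exact G.sum_degree_mul_le_maxDegree_mul_sum hu
    _ = 2 * ε * (G.maxDegree : ℝ) * welfareA G w s := by ring

theorem stmt11 [Fintype V] (G : SimpleGraph V)
    (ε : ℝ) (hε : 1 ≤ ε) (k : ℕ) (hk : 2 ≤ k)
    (c : ℕ) (St : V → Finset (Fin c)) (hSt : ∀ i, (St i).Nonempty)
    (w : V → V → ℝ) (hw : ∀ i j, 0 ≤ w i j) (hwsymm : ∀ i j, w i j = w j i)
    (s : V → Fin c) (hsv : ∀ i, s i ∈ St i)
    (hs : IsEpsKEq G w St ε k s)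
    (sstar : V → Fin c) (hsstarv : ∀ i, sstar i ∈ St i) :
    welfareA G w sstar ≤ 2 * ε * (G.maxDegree : ℝ) * welfareA G w s :=
  stmt11_general G ε hε k hk c St w hw hwsymm s hs sstar hsstarv
end

section
/- Let n ≥ 3 and let Γ be a symmetric clustering game with c = 2 colors on the cycle H with vertices 1,…,n and edges {i, i+1} (indices modulo n). Suppose that for every strategy profile s and every player i, the color k ∈ {1,2} that makes the edge {i, i+1} satisfied (given s_{i+1}) is a best response for player i, i.e., u_i(s_{-i},k) ≥ u_i(s_{-i},k') where k' is the other color. Then there exist T ≥ 1 and a cyclic sequence of profiles s^0, s^1, …, s^T with s^T = s^0 such that for each t, s^{t+1} differs from s^t in exactly one player i, and the new color s^{t+1}_i ≠ s^t_i is a best response for player i in s^t; hence there exists a best-response sequence that does not converge to a pure Nash equilibrium. -/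
open Finset
open scoped Classical

variable {V : Type*}

/-!
With colours in `Fin 2`, put `g i = 0` on a coordination and `g i = 1` on an anti-coordination
edge `{i, i+1}`. This edge, which player `i` wants satisfied, is unsatisfied in `s` exactly when
`defect g s i = s i + s (i+1) + g i` equals `1`. Flipping such a player `i` is a best response; it
repairs the edge `{i, i+1}` and toggles `{i-1, i}`, so a defect at `i` moves to `i-1`, and the
number of defects has the parity of `∑ g`. If that parity is odd, a single defect runs around the
cycle; if it is even, two adjacent defects run around it in tandem, the rear one moving first. In
both cases the flipped players repeat periodically, and over two periods every player flips an even
number of times, so the profile returns to its start.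
-/

section

open Function Fin.CommRing

section Flips

variable {ι : Type*} [DecidableEq ι]

def flipSeq (s : ι → Fin 2) (v : ℕ → ι) (t : ℕ) : ι → Fin 2 :=
  s + ∑ τ ∈ range t, Pi.single (v τ) 1

variable (s : ι → Fin 2) (v : ℕ → ι)

@[simp] lemma flipSeq_zero : flipSeq s v 0 = s := by
  simp [flipSeq]

lemma flipSeq_succ (t : ℕ) : flipSeq s v (t + 1) = flipSeq s v t + Pi.single (v t) 1 := by
  rw [flipSeq, flipSeq, sum_range_succ, add_assoc]

lemma add_single_one_eq_update (i : ι) : s + Pi.single i 1 = update s i (s i + 1) := by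
  ext1 j
  rcases eq_or_ne j i with rfl | hj <;> simp [*]

lemma flipSeq_add_self_of_periodic {P : ℕ} (hv : ∀ τ, v (P + τ) = v τ) :
    flipSeq s v (P + P) = s := by
  have hx (x : ι → Fin 2) : x + x = 0 := funext fun i => CharTwo.add_self_eq_zero (x i)
  rw [flipSeq, sum_range_add]
  simp only [hv, hx, add_zero]

end Flips

variable {n : ℕ} [NeZero n]

lemma Fin.sub_natCast_ne_self (x : Fin n) {k : ℕ} (hk : 0 < k) (hkn : k < n) : x - k ≠ x := by
  rw [Ne, sub_eq_self, Fin.natCast_eq_zero]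
  exact fun h => absurd (Nat.le_of_dvd hk h) (by omega)

def defect (g s : Fin n → Fin 2) (i : Fin n) : Fin 2 :=
  s i + s (i + 1) + g i

lemma defect_eq_one_iff {g s : Fin n → Fin 2} {i : Fin n} :
    defect g s i = 1 ↔ s i + 1 = s (i + 1) + g i := by
  unfold defect
  generalize s i = a; generalize s (i + 1) = b; generalize g i = c
  revert a b c; decide

lemma defect_add_single (g s : Fin n → Fin 2) (v : Fin n) :
    defect g (s + Pi.single v 1) = defect g s + Pi.single v 1 + Pi.single (v - 1) 1 := by
  funext i
  have : (Pi.single v 1 : Fin n → Fin 2) (i + 1) = (Pi.single (v - 1) 1 : Fin n → Fin 2) i := by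
    simp [Pi.single_apply, eq_sub_iff_add_eq]
  simp only [defect, Pi.add_apply, this]
  ring

-- `s` is the prefix sum of `x + g`; the hypothesis on the sums makes it close up around the cycle.
lemma exists_defect_eq (g x : Fin n → Fin 2) (h : ∑ i, x i = ∑ i, g i) :
    ∃ s, defect g s = x := by
  set P : ℕ → Fin 2 := fun k => ∑ j ∈ range k, (x j + g j)
  have hPn : P n = P 0 := by
    simp only [P, sum_range_zero]
    rw [← Fin.sum_univ_eq_sum_range (fun j => x j + g j)]
    simp only [Fin.cast_val_eq_self]
    rw [sum_add_distrib, h, CharTwo.add_self_eq_zero]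
  have hP : ∀ i : Fin n, P (i + 1 : Fin n) = P i + (x i + g i) := by
    intro i
    have hsucc : P (i + 1) = P i + (x i + g i) := by
      simp only [P, sum_range_succ, Fin.cast_val_eq_self]
    rw [Fin.val_add, Fin.val_one', Nat.add_mod_mod]
    rcases Nat.lt_or_ge (i + 1) n with hlt | hge
    · rw [Nat.mod_eq_of_lt hlt, hsucc]
    · rw [← hsucc, show (i : ℕ) + 1 = n by omega, Nat.mod_self, hPn]
  refine ⟨fun i => P i, funext fun i => ?_⟩
  rw [defect, hP, ← add_assoc, CharTwo.add_self_eq_zero, zero_add, CharTwo.add_cancel_right]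

lemma exists_periodic_defect_walk_of_sum_eq_one (g : Fin n → Fin 2) (hg : ∑ i, g i = 1) :
    ∃ (s : Fin n → Fin 2) (v : ℕ → Fin n),
      (∀ τ, v (n + τ) = v τ) ∧ ∀ t, defect g (flipSeq s v t) (v t) = 1 := by
  obtain ⟨s, hs⟩ := exists_defect_eq g (Pi.single (-1) 1) (by simp [hg])
  set v : ℕ → Fin n := fun t => -((t + 1 : ℕ) : Fin n)
  have hdefect : ∀ t, defect g (flipSeq s v t) = Pi.single (v t) 1 := by
    intro t
    induction t with
    | zero => simpa [v] using hs
    | succ t ih =>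
      rw [flipSeq_succ, defect_add_single, ih, CharTwo.add_self_eq_zero, zero_add]
      congr 1
      simp only [v]
      push_cast
      ring
  refine ⟨s, v, fun τ => ?_, fun t => by simp [hdefect]⟩
  simp only [v]
  push_cast
  simp

lemma exists_periodic_defect_walk_of_sum_eq_zero (hn : 3 ≤ n) (g : Fin n → Fin 2)
    (hg : ∑ i, g i = 0) :
    ∃ (s : Fin n → Fin 2) (v : ℕ → Fin n),
      (∀ τ, v (2 * n + τ) = v τ) ∧ ∀ t, defect g (flipSeq s v t) (v t) = 1 := by
  obtain ⟨s, hs⟩ := exists_defect_eq g (Pi.single 0 1 + Pi.single (-1) 1)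
    (by simp [sum_add_distrib, hg])
  set a : ℕ → Fin n := fun r => -(r : Fin n)
  set v : ℕ → Fin n := fun t => if t % 2 = 0 then a (t / 2) - 1 else a (t / 2)
  have hv_even : ∀ r, v (2 * r) = a r - 1 := fun r => by simp [v]
  have hv_odd : ∀ r, v (2 * r + 1) = a r := fun r => by
    simp only [v, if_neg (by omega : ¬ (2 * r + 1) % 2 = 0)]
    congr 1; omega
  have ha : ∀ r, a (r + 1) = a r - 1 := fun r => by simp only [a]; push_cast; ring
  have hdefect_odd : ∀ r,
      defect g (flipSeq s v (2 * r)) = Pi.single (a r) 1 + Pi.single (a r - 1) 1 →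
      defect g (flipSeq s v (2 * r + 1)) = Pi.single (a r) 1 + Pi.single (a r - 1 - 1) 1 := by
    intro r h
    rw [flipSeq_succ, defect_add_single, h, hv_even, CharTwo.add_cancel_right]
  have hdefect_even : ∀ r,
      defect g (flipSeq s v (2 * r)) = Pi.single (a r) 1 + Pi.single (a r - 1) 1 := by
    intro r
    induction r with
    | zero => simpa [a] using hs
    | succ r ih =>
      rw [show 2 * (r + 1) = 2 * r + 1 + 1 by ring, flipSeq_succ, defect_add_single,
        hdefect_odd r ih, hv_odd, ha, add_comm (Pi.single (a r) 1), CharTwo.add_cancel_right,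
        add_comm]
  have hne1 (x : Fin n) : x - 1 ≠ x := by
    exact_mod_cast Fin.sub_natCast_ne_self x one_pos (by omega)
  have hne2 (x : Fin n) : x - 1 - 1 ≠ x := by
    rw [sub_sub, one_add_one_eq_two]
    exact_mod_cast Fin.sub_natCast_ne_self x two_pos (by omega)
  refine ⟨s, v, fun τ => ?_, fun t => ?_⟩
  · have : (2 * n + τ) / 2 = n + τ / 2 := by omega
    simp [v, a, this]
  · obtain ⟨r, rfl | rfl⟩ := Nat.even_or_odd' t
    · simp [hdefect_even, hv_even, hne1]
    · simp [hdefect_odd r (hdefect_even r), hv_odd, hne2]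

lemma exists_periodic_defect_walk (hn : 3 ≤ n) (g : Fin n → Fin 2) :
    ∃ (s : Fin n → Fin 2) (v : ℕ → Fin n) (P : ℕ),
      1 ≤ P ∧ (∀ τ, v (P + τ) = v τ) ∧ ∀ t, defect g (flipSeq s v t) (v t) = 1 := by
  obtain h | h : ∑ i, g i = 0 ∨ ∑ i, g i = 1 := by
    generalize ∑ i, g i = c
    revert c; decide
  · obtain ⟨s, v, hv, hdefect⟩ := exists_periodic_defect_walk_of_sum_eq_zero hn g h
    exact ⟨s, v, 2 * n, by omega, hv, hdefect⟩
  · obtain ⟨s, v, hv, hdefect⟩ := exists_periodic_defect_walk_of_sum_eq_one g h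
    exact ⟨s, v, n, by omega, hv, hdefect⟩

noncomputable def edgeParity (coord : Fin n → Fin n → Prop) (i : Fin n) : Fin 2 :=
  if coord i (i + 1) then 0 else 1

lemma satisfies_iff_eq_add_edgeParity (coord : Fin n → Fin n → Prop) (i : Fin n)
    (k b : Fin 2) :
    ((coord i (i + 1) ∧ k = b) ∨ (¬ coord i (i + 1) ∧ k ≠ b)) ↔
      k = b + edgeParity coord i := by
  by_cases hc : coord i (i + 1) <;> simp only [edgeParity, hc, if_true, if_false] <;>
    revert k b <;> decide

end

theorem stmt16_general (n : ℕ) (hn : 3 ≤ n) [NeZero n]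
    (coord : Fin n → Fin n → Prop)
    (α w : Fin n → Fin n → ℝ) (q : Fin n → Fin 2 → ℝ)
    (hBR : ∀ (s : Fin n → Fin 2) (i : Fin n) (k : Fin 2),
      ((coord i (i + 1) ∧ k = s (i + 1)) ∨ (¬ coord i (i + 1) ∧ k ≠ s (i + 1))) →
      ∀ k' : Fin 2,
        util (SimpleGraph.cycleGraph n) coord α w q (Function.update s i k') i ≤
          util (SimpleGraph.cycleGraph n) coord α w q (Function.update s i k) i) :
    ∃ (T : ℕ) (f : ℕ → Fin n → Fin 2), 1 ≤ T ∧ f T = f 0 ∧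
      ∀ t < T, ∃ i : Fin n,
        f (t + 1) i ≠ f t i ∧ (∀ j, j ≠ i → f (t + 1) j = f t j) ∧
        ∀ k' : Fin 2,
          util (SimpleGraph.cycleGraph n) coord α w q (Function.update (f t) i k') i ≤
            util (SimpleGraph.cycleGraph n) coord α w q (f (t + 1)) i := by
  obtain ⟨s, v, P, hP, hv, hdefect⟩ := exists_periodic_defect_walk hn (edgeParity coord)
  refine ⟨P + P, flipSeq s v, by omega, by rw [flipSeq_add_self_of_periodic s v hv, flipSeq_zero],
    fun t _ => ⟨v t, ?_, fun j hj => ?_, fun k' => ?_⟩⟩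
  · simp [flipSeq_succ]
  · simp [flipSeq_succ, Pi.single_eq_of_ne hj]
  · rw [flipSeq_succ, add_single_one_eq_update]
    exact hBR _ _ _ ((satisfies_iff_eq_add_edgeParity _ _ _ _).mpr
      (defect_eq_one_iff.mp (hdefect t))) k'

theorem stmt16 (n : ℕ) (hn : 3 ≤ n) [NeZero n]
    (coord : Fin n → Fin n → Prop) (hcoord : ∀ i j, coord i j ↔ coord j i)
    (α w : Fin n → Fin n → ℝ) (q : Fin n → Fin 2 → ℝ)
    (hα0 : ∀ i j, 0 ≤ α i j)
    (hαs : ∀ i j, (SimpleGraph.cycleGraph n).Adj i j → 0 < α i j + α j i)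
    (hw : ∀ i j, 0 ≤ w i j) (hwsymm : ∀ i j, w i j = w j i)
    (hq : ∀ i k, 0 ≤ q i k)
    (hBR : ∀ (s : Fin n → Fin 2) (i : Fin n) (k : Fin 2),
      ((coord i (i + 1) ∧ k = s (i + 1)) ∨ (¬ coord i (i + 1) ∧ k ≠ s (i + 1))) →
      ∀ k' : Fin 2,
        util (SimpleGraph.cycleGraph n) coord α w q (Function.update s i k') i ≤
          util (SimpleGraph.cycleGraph n) coord α w q (Function.update s i k) i) :
    ∃ (T : ℕ) (f : ℕ → Fin n → Fin 2), 1 ≤ T ∧ f T = f 0 ∧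
      ∀ t < T, ∃ i : Fin n,
        f (t + 1) i ≠ f t i ∧ (∀ j, j ≠ i → f (t + 1) j = f t j) ∧
        ∀ k' : Fin 2,
          util (SimpleGraph.cycleGraph n) coord α w q (Function.update (f t) i k') i ≤
            util (SimpleGraph.cycleGraph n) coord α w q (f (t + 1)) i :=
  stmt16_general n hn coord α w q hBR
end
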